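/- arXiv:1812.06882 — 7 statements merged into one kernel-verified Lean document; each statement's English description precedes it below -/
import Mathlib

section
/- Let K/F be a finite separable field extension, let (b_i)_{i∈ι} be an F-basis of K indexed by a finite type ι, and let c ∈ K. Then the determinant of the ι×ι matrix whose (i,j) entry is Tr_{K/F}(c · b_i · b_j) equals discr_F(b) · Norm_{K/F}(c), where discr_F(b) is the discriminant of the basis b, i.e. the determinant of the trace matrix (Tr_{K/F}(b_i·b_j)). -/
open scoped Matrix

namespace Algebra

variable {R S ι : Type*} [CommRing R] [CommRing S] [Algebra R S] [Fintype ι] [DecidableEq ι]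

theorem mul_basis_eq_sum_leftMulMatrix_smul (b : Module.Basis ι R S) (c : S) (i : ι) :
    c * b i = ∑ k, leftMulMatrix b c k i • b k := by
  simp only [leftMulMatrix_eq_repr_mul, b.sum_repr]

theorem of_trace_mul_mul_eq_transpose_leftMulMatrix_mul_traceMatrix
    (b : Module.Basis ι R S) (c : S) :
    Matrix.of (fun i j => trace R S (c * b i * b j)) = (leftMulMatrix b c)ᵀ * traceMatrix R b := by
  ext i j
  calc trace R S (c * b i * b j)
      = trace R S ((∑ k, leftMulMatrix b c k i • b k) * b j) := by
        rw [mul_basis_eq_sum_leftMulMatrix_smul b c i]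
    _ = ∑ k, leftMulMatrix b c k i * trace R S (b k * b j) := by
        simp only [Finset.sum_mul, map_sum, smul_mul_assoc, map_smul, smul_eq_mul]
    _ = ((leftMulMatrix b c)ᵀ * traceMatrix R b) i j := rfl

end Algebra

theorem det_traceMatrix_smul_eq_discr_mul_norm_general
    (F K : Type*) [Field F] [Field K] [Algebra F K] (ι : Type*) [Fintype ι] [DecidableEq ι]
    (b : Module.Basis ι F K) (c : K) :
    (Matrix.of fun i j : ι => Algebra.trace F K (c * b i * b j)).det =
      Algebra.discr F ⇑b * Algebra.norm F c := by
  rw [Algebra.of_trace_mul_mul_eq_transpose_leftMulMatrix_mul_traceMatrix, Matrix.det_mul,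
    Matrix.det_transpose, ← Algebra.norm_eq_matrix_det, Algebra.discr_def, mul_comm]

/-- For a finite separable field extension `K/F` with `F`-basis `b : ι → K` and `c ∈ K`, the
determinant of the matrix `(Tr_{K/F} (c * bᵢ * bⱼ))` equals `discr_F b * Norm_{K/F} c`. -/
theorem det_traceMatrix_smul_eq_discr_mul_norm
    (F K : Type*) [Field F] [Field K] [Algebra F K] [FiniteDimensional F K]
    [Algebra.IsSeparable F K] (ι : Type*) [Fintype ι] [DecidableEq ι]
    (b : Module.Basis ι F K) (c : K) :
    (Matrix.of fun i j : ι => Algebra.trace F K (c * b i * b j)).det =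
      Algebra.discr F ⇑b * Algebra.norm F c :=
  det_traceMatrix_smul_eq_discr_mul_norm_general F K ι b c
end

section
/- Let K/F be a finite separable field extension, let (b_i)_{i∈ι} be an F-basis of K indexed by a finite type ι, let n be a natural number, and let M be an n×n matrix with entries in K. Consider the square matrix G indexed by ι × Fin n with entries G((i,k),(j,l)) = Tr_{K/F}(b_i · b_j · M k l). Then det G = (discr_F(b))^n · Norm_{K/F}(det M). -/
/-!
With `L x` the matrix of multiplication by `x` in the basis `b` and `T` the trace matrix of `b`,
`Tr (bᵢ * bⱼ * x) = (T * L x) i j`. Up to reordering the indices, the matrix in question is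
therefore the block matrix `diag (T, …, T) * (L (M k l))ₖₗ`. The first factor has determinant
`(det T) ^ n = discr b ^ n`. The blocks of the second lie in the commutative ring `L K`, so by
Silvester's theorem (`Matrix.det_det`) its determinant is `det (L (det M)) = N (det M)`.
-/

open Matrix

open scoped Kronecker

namespace Matrix

theorem comp_diagonal_const {m n R : Type*} [DecidableEq m] [CommRing R] (A : Matrix n n R) :
    comp m m n n R (diagonal fun _ => A) = (1 : Matrix m m R) ⊗ₖ A := by
  ext ⟨k, i⟩ ⟨l, j⟩
  by_cases hkl : k = l <;> simp [hkl]

theorem det_comp_diagonal_const {m n R : Type*} [Fintype m] [DecidableEq m] [Fintype n]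
    [DecidableEq n] [CommRing R] (A : Matrix n n R) :
    (comp m m n n R (diagonal fun _ => A)).det = A.det ^ Fintype.card m := by
  rw [comp_diagonal_const, det_kronecker, det_one, one_pow, one_mul]

end Matrix

namespace Algebra

variable {R S ι : Type*} [CommRing R] [CommRing S] [Algebra R S] [Fintype ι] [DecidableEq ι]

theorem traceMatrix_mul_leftMulMatrix_apply (b : Module.Basis ι R S) (x : S) (i j : ι) :
    (traceMatrix R b * leftMulMatrix b x) i j = trace R S (b i * b j * x) := by
  have hx : x * b j = ∑ r, leftMulMatrix b x r j • b r := by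
    simp_rw [leftMulMatrix_eq_repr_mul]
    exact (b.sum_repr _).symm
  rw [mul_assoc, mul_comm (b j), hx, Finset.mul_sum, map_sum, mul_apply]
  refine Finset.sum_congr rfl fun r _ => ?_
  rw [mul_smul_comm, map_smul, smul_eq_mul, mul_comm, traceMatrix_apply, traceForm_apply]

theorem det_comp_map_leftMulMatrix {m : Type*} [Fintype m] [DecidableEq m]
    (b : Module.Basis ι R S) (M : Matrix m m S) :
    (comp m m ι ι R (M.map (leftMulMatrix b))).det = norm R M.det := by
  rw [norm_eq_matrix_det b]
  exact (det_det M (leftMulMatrix b).toRingHom).symm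

end Algebra

theorem det_corestriction_eq_discr_pow_mul_norm_det_general
    (F K : Type*) [Field F] [Field K] [Algebra F K]
    (ι : Type*) [Fintype ι] [DecidableEq ι]
    (b : Module.Basis ι F K) (n : ℕ) (M : Matrix (Fin n) (Fin n) K) :
    (Matrix.of fun p q : ι × Fin n =>
        Algebra.trace F K (b p.1 * b q.1 * M p.2 q.2)).det =
      Algebra.discr F ⇑b ^ n * Algebra.norm F M.det := by
  let e := Equiv.prodComm (Fin n) ι
  have hG : (Matrix.of fun p q : ι × Fin n => Algebra.trace F K (b p.1 * b q.1 * M p.2 q.2)) =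
      reindex e e (compRingEquiv (Fin n) ι F
        (diagonal (fun _ => Algebra.traceMatrix F b) * M.map (Algebra.leftMulMatrix b))) := by
    ext ⟨i, k⟩ ⟨j, l⟩
    simp [e, diagonal_mul, Algebra.traceMatrix_mul_leftMulMatrix_apply]
  rw [hG, det_reindex_self, map_mul, det_mul, compRingEquiv_apply, compRingEquiv_apply,
    det_comp_diagonal_const, Algebra.det_comp_map_leftMulMatrix, Fintype.card_fin,
    Algebra.discr_def]

/-- Determinant of the corestriction of a bilinear form: for a finite separable field extension
`K/F` with `F`-basis `b : ι → K` and an `n × n` matrix `M` over `K`, the determinant of the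
`(ι × Fin n) × (ι × Fin n)` matrix `G ((i,k),(j,l)) = Tr_{K/F} (bᵢ * bⱼ * M k l)` equals
`(discr_F b) ^ n * Norm_{K/F} (det M)`. -/
theorem det_corestriction_eq_discr_pow_mul_norm_det
    (F K : Type*) [Field F] [Field K] [Algebra F K] [FiniteDimensional F K]
    [Algebra.IsSeparable F K] (ι : Type*) [Fintype ι] [DecidableEq ι]
    (b : Module.Basis ι F K) (n : ℕ) (M : Matrix (Fin n) (Fin n) K) :
    (Matrix.of fun p q : ι × Fin n =>
        Algebra.trace F K (b p.1 * b q.1 * M p.2 q.2)).det =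
      Algebra.discr F ⇑b ^ n * Algebra.norm F M.det :=
  det_corestriction_eq_discr_pow_mul_norm_det_general F K ι b n M
end

section
/- Let R be a principal ideal domain with fraction field F of characteristic zero, let a, b be nonzero elements of F, and let B = ℍ[F,a,b]. Let O be an R-order in B that is free of rank 4 as an R-module, with R-basis e₁, e₂, e₃, e₄, and suppose there exists γ₀ ∈ O with trd(γ₀) = 1. Then O ∩ B⁰ is free of rank 3 as an R-module, and for any R-basis f₁, f₂, f₃ of O ∩ B⁰ the ideal of R generated by det(trd(f_i · f_j))_{1≤i,j≤3} equals the ideal generated by 2 · det(trd(e_i · e_j))_{1≤i,j≤4}. (That is, the discriminant of the trace form on O ∩ B⁰ equals 2 times the discriminant of O, up to units.) -/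
set_option synthInstance.maxHeartbeats 800000
set_option maxHeartbeats 1600000

open Quaternion

/-- The reduced trace of a quaternion: `trd x = x + star x`, identified with a scalar. -/
def QuaternionAlgebra.trd {F : Type*} [CommRing F] {a b : F} (x : ℍ[F, a, b]) : F :=
  (x + star x).re

theorem QuaternionAlgebra.trd_eq {F : Type*} [CommRing F] {a b : F} (x : ℍ[F, a, b]) :
    x.trd = x.re + x.re := by simp [trd]

/-- The trace-zero elements `B⁰` of `ℍ[F,a,b]`, as an `R`-submodule for a ring of scalars
`R → F`. -/
def QuaternionAlgebra.traceZeroSubmodule (R F : Type*) [CommRing R] [CommRing F] [Algebra R F]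
    (a b : F) : Submodule R ℍ[F, a, b] where
  carrier := {x | trd x = 0}
  zero_mem' := by simp [trd_eq]
  add_mem' := by
    intro x y hx hy
    simp only [Set.mem_setOf_eq, trd_eq, re_add] at *
    linear_combination hx + hy
  smul_mem' := by
    intro c x hx
    simp only [Set.mem_setOf_eq, trd_eq, re_smul] at *
    rw [← smul_add, hx, smul_zero]

namespace QuaternionAlgebra

variable {F : Type*} [CommRing F] {a b : F}

lemma my_trd_add (x y : ℍ[F,a,b]) : trd (x + y) = trd x + trd y := by
  simp [trd_eq]; ring

lemma my_trd_smul (c : F) (x : ℍ[F,a,b]) : trd (c • x) = c * trd x := by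
  simp [trd_eq, re_smul]; ring

lemma my_trd_one : trd (1 : ℍ[F,a,b]) = 2 := by
  simp [trd_eq]; ring

lemma my_star_eq (x : ℍ[F,a,b]) : star x = algebraMap F ℍ[F,a,b] (trd x) - x := by
  ext <;> simp [trd_eq, coe_algebraMap] <;> ring

lemma my_star_smul {R : Type*} [CommRing R] [Algebra R F] (c : R) (x : ℍ[F,a,b]) :
    star (c • x) = c • star x := by ext <;> simp

lemma my_isIntegral_star {R : Type*} [CommRing R] [Algebra R F] {x : ℍ[F,a,b]}
    (h : IsIntegral R x) : IsIntegral R (star x) := by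
  obtain ⟨p, hm, hp⟩ := h
  refine ⟨p, hm, ?_⟩
  have h2 : star ((Polynomial.aeval x) p) = (Polynomial.aeval (star x)) p := by
    rw [Polynomial.aeval_eq_sum_range (x := x), Polynomial.aeval_eq_sum_range (x := star x)]
    rw [star_sum]
    refine Finset.sum_congr rfl fun i _ => ?_
    rw [my_star_smul, star_pow]
  show (Polynomial.aeval (star x)) p = 0
  rw [← h2]
  have hp' : (Polynomial.aeval x) p = 0 := hp
  rw [hp', star_zero]

def trdₗ (F : Type*) [CommRing F] (a b : F) : ℍ[F,a,b] →ₗ[F] F where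
  toFun := trd
  map_add' x y := my_trd_add x y
  map_smul' c x := by
    show trd (c • x) = c • trd x
    rw [my_trd_smul, smul_eq_mul]

@[simp] lemma trdₗ_apply (x : ℍ[F,a,b]) : trdₗ F a b x = trd x := rfl

lemma gram_change {R : Type*} [CommRing R] [Algebra R F]
    {ι κ : Type*} [Fintype ι] [Fintype κ] [DecidableEq ι] [DecidableEq κ]
    (w : ι → ℍ[F,a,b]) (v : κ → ℍ[F,a,b]) (P : Matrix ι κ R)
    (h : ∀ j, v j = ∑ i, P i j • w i) :
    (Matrix.of fun j k => trd (v j * v k)) =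
      (P.map (algebraMap R F)).transpose * (Matrix.of fun i l => trd (w i * w l))
        * (P.map (algebraMap R F)) := by
  ext j k
  show trd (v j * v k) = _
  rw [h j, h k, Finset.sum_mul_sum]
  have hterm : ∀ i l, (P i j • w i) * (P l k • w l)
      = (algebraMap R F (P i j) * algebraMap R F (P l k)) • (w i * w l) := by
    intro i l
    rw [← algebraMap_smul F (P i j) (w i), ← algebraMap_smul F (P l k) (w l),
      smul_mul_smul_comm]
  calc trd (∑ i, ∑ l, (P i j • w i) * (P l k • w l))
      = ∑ i, ∑ l, (algebraMap R F (P i j) * algebraMap R F (P l k)) * trd (w i * w l) := by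
        rw [← trdₗ_apply, map_sum]
        refine Finset.sum_congr rfl fun i _ => ?_
        rw [map_sum]
        refine Finset.sum_congr rfl fun l _ => ?_
        rw [hterm i l, ← smul_eq_mul, ← trdₗ_apply, map_smul, smul_eq_mul, trdₗ_apply]
    _ = _ := by
        rw [Finset.sum_comm]
        simp only [Matrix.mul_apply, Matrix.transpose_apply, Matrix.map_apply, Matrix.of_apply,
          Finset.sum_mul]
        refine Finset.sum_congr rfl fun l _ => Finset.sum_congr rfl fun i _ => ?_
        ring

lemma my_exists_trd_eq {R : Type*} [CommRing R] [IsDomain R] [IsPrincipalIdealRing R]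
    {F : Type*} [Field F] [Algebra R F] [IsFractionRing R F] {a b : F}
    {x : ℍ[F,a,b]} (hx : IsIntegral R x) : ∃ r : R, algebraMap R F r = trd x := by
  set S := Algebra.adjoin F ({x} : Set ℍ[F,a,b]) with hS
  letI : CommRing S := Algebra.adjoinCommRingOfComm F (by rintro y rfl z rfl; rfl)
  have hxS : x ∈ S := Algebra.self_mem_adjoin_singleton F x
  have hstar_eq : star x = algebraMap F ℍ[F,a,b] (trd x) - x := my_star_eq x
  have hsS : star x ∈ S := by
    rw [hstar_eq]
    exact sub_mem (Subalgebra.algebraMap_mem S _) hxS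
  have hval_inj : Function.Injective (S.val.restrictScalars R) := Subtype.coe_injective
  have hx' : IsIntegral R (⟨x, hxS⟩ : S) :=
    (isIntegral_algHom_iff (S.val.restrictScalars R) hval_inj).mp hx
  have hy' : IsIntegral R (⟨star x, hsS⟩ : S) :=
    (isIntegral_algHom_iff (S.val.restrictScalars R) hval_inj).mp (my_isIntegral_star hx)
  have hsum : IsIntegral R ((⟨x, hxS⟩ : S) + ⟨star x, hsS⟩) := hx'.add hy'
  have heq : (⟨x, hxS⟩ : S) + ⟨star x, hsS⟩ = algebraMap F S (trd x) := by
    apply Subtype.ext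
    show x + star x = _
    rw [Subalgebra.coe_algebraMap]
    rw [hstar_eq]; abel
  rw [heq] at hsum
  have hFS_inj : Function.Injective (IsScalarTower.toAlgHom R F S) := by
    intro c d h
    have h2 : (algebraMap F S c : ℍ[F,a,b]) = (algebraMap F S d : ℍ[F,a,b]) :=
      congrArg Subtype.val h
    rw [Subalgebra.coe_algebraMap, Subalgebra.coe_algebraMap] at h2
    have : Function.Injective (algebraMap F ℍ[F,a,b]) := by
      rw [coe_algebraMap]; exact coe_injective
    exact this h2
  have htrd : IsIntegral R (trd x) :=
    (isIntegral_algHom_iff (IsScalarTower.toAlgHom R F S) hFS_inj).mp hsum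
  exact IsIntegrallyClosed.isIntegral_iff.mp htrd

end QuaternionAlgebra

open QuaternionAlgebra in
/-- Let `R` be a PID with fraction field `F` of characteristic zero, `a b ∈ F` nonzero, and
`B = ℍ[F,a,b]`. Let `O` be an `R`-order in `B` which is free of rank 4 with `R`-basis
`e₁, …, e₄`, containing an element `γ₀` of reduced trace `1`. Then `O ∩ B⁰` is a free
`R`-module of rank `3`, and for every `R`-basis `f₁, f₂, f₃` of `O ∩ B⁰` the ideal of `R`
generated by `det (trd (fᵢ * fⱼ))` equals the ideal generated by `2 * det (trd (eᵢ * eⱼ))`: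
the discriminant of the trace form on `O ∩ B⁰` is `2 · disc O` up to units. -/
theorem discr_traceForm_order_inter_trace_zero
    (R : Type*) [CommRing R] [IsDomain R] [IsPrincipalIdealRing R]
    (F : Type*) [Field F] [CharZero F] [Algebra R F] [IsFractionRing R F]
    (a b : F) (ha : a ≠ 0) (hb : b ≠ 0)
    (O : Subalgebra R ℍ[F, a, b])
    (hspan : Submodule.span F (O : Set ℍ[F, a, b]) = ⊤)
    (e : Module.Basis (Fin 4) R O)
    (γ₀ : ℍ[F, a, b]) (hγ₀O : γ₀ ∈ O) (hγ₀ : trd γ₀ = 1) :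
    Module.Free R ↥(Subalgebra.toSubmodule O ⊓ traceZeroSubmodule R F a b) ∧
    Module.finrank R ↥(Subalgebra.toSubmodule O ⊓ traceZeroSubmodule R F a b) = 3 ∧
    ∀ f : Module.Basis (Fin 3) R ↥(Subalgebra.toSubmodule O ⊓ traceZeroSubmodule R F a b),
      Submodule.span R
          ({(Matrix.of fun i j : Fin 3 =>
              trd ((f i : ℍ[F, a, b]) * (f j : ℍ[F, a, b]))).det} : Set F) =
        Submodule.span R
          ({2 * (Matrix.of fun i j : Fin 4 =>
              trd ((e i : ℍ[F, a, b]) * (e j : ℍ[F, a, b]))).det} : Set F) := by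
  classical
  haveI : Module.Finite R O := Module.Finite.of_basis e
  have hint : ∀ x : O, IsIntegral R (x : ℍ[F,a,b]) := fun x =>
    (IsIntegral.of_finite R x).map O.val
  have hTrd : ∀ x : O, ∃ r : R, algebraMap R F r = trd (x : ℍ[F,a,b]) := fun x =>
    my_exists_trd_eq (hint x)
  have hinj : Function.Injective (algebraMap R F) := IsFractionRing.injective R F
  -- the reduced trace as an R-linear map O →ₗ[R] R
  let T' : O →ₗ[R] R :=
    { toFun := fun x => (hTrd x).choose
      map_add' := fun x y => by
        apply hinj
        rw [map_add, (hTrd _).choose_spec, (hTrd _).choose_spec, (hTrd _).choose_spec]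
        push_cast
        exact my_trd_add _ _
      map_smul' := fun r x => by
        apply hinj
        show algebraMap R F ((hTrd (r • x)).choose) = algebraMap R F (r • (hTrd x).choose)
        rw [(hTrd _).choose_spec, smul_eq_mul, map_mul, (hTrd _).choose_spec]
        have hcoe : ((r • x : O) : ℍ[F,a,b]) = (algebraMap R F r) • (x : ℍ[F,a,b]) := by
          push_cast
          rw [algebraMap_smul]
        rw [hcoe, my_trd_smul] }
  have hT' : ∀ x : O, algebraMap R F (T' x) = trd (x : ℍ[F,a,b]) := fun x =>
    (hTrd x).choose_spec
  set γ' : O := ⟨γ₀, hγ₀O⟩ with hγ'def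
  have hT'γ : T' γ' = 1 := by
    apply hinj
    rw [hT', map_one]
    exact hγ₀
  let σ : R →ₗ[R] O := LinearMap.toSpanSingleton R O γ'
  have hσap : ∀ r : R, σ r = r • γ' := fun r => rfl
  have hσ : ∀ r : R, T' (σ r) = r := fun r => by
    rw [hσap, map_smul, hT'γ, smul_eq_mul, mul_one]
  set N := LinearMap.ker T' with hNdef
  have hcompl : IsCompl N (LinearMap.range σ) := by
    constructor
    · rw [Submodule.disjoint_def]
      intro x hx1 hx2
      obtain ⟨r, rfl⟩ := hx2
      have : r = 0 := by rw [← hσ r]; exact hx1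
      rw [this, map_zero]
    · rw [codisjoint_iff, Submodule.eq_top_iff']
      intro x
      refine Submodule.mem_sup.mpr ⟨x - T' x • γ', ?_, T' x • γ', ⟨T' x, rfl⟩, by abel⟩
      rw [hNdef, LinearMap.mem_ker, map_sub, map_smul, hT'γ, smul_eq_mul, mul_one, sub_self]
  obtain ⟨m, bN⟩ := Submodule.basisOfPid e N
  have hσinj : Function.Injective σ := fun r s h => by
    rw [← hσ r, ← hσ s, h]
  let bσ : Module.Basis (Fin 1) R (LinearMap.range σ) :=
    (Module.Basis.singleton (Fin 1) R).map (LinearEquiv.ofInjective σ hσinj)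
  have hm : m = 3 := by
    have h4 : Module.finrank R O = 4 := by
      rw [Module.finrank_eq_card_basis e, Fintype.card_fin]
    have hm1 : Module.finrank R O = m + 1 := by
      rw [Module.finrank_eq_card_basis
        ((bN.prod bσ).map (Submodule.prodEquivOfIsCompl N (LinearMap.range σ) hcompl))]
      simp
    omega
  subst hm
  -- identify M = O ⊓ B⁰ with N = ker T'
  have hNM : Submodule.comap (Subalgebra.toSubmodule O).subtype
      (Subalgebra.toSubmodule O ⊓ traceZeroSubmodule R F a b) = N := by
    ext x
    simp only [Submodule.mem_comap, Submodule.mem_inf, hNdef, LinearMap.mem_ker]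
    constructor
    · rintro ⟨-, hx2⟩
      have hx2' : trd ((x : ℍ[F,a,b])) = 0 := hx2
      apply hinj
      rw [map_zero]
      exact (hT' ⟨x.1, x.2⟩).trans hx2'
    · intro hx
      refine ⟨x.2, ?_⟩
      show trd ((x : ℍ[F,a,b])) = 0
      have hx' : T' ⟨x.1, x.2⟩ = 0 := hx
      rw [← hT' ⟨x.1, x.2⟩, hx', map_zero]
  let eNM : N ≃ₗ[R] ↥(Subalgebra.toSubmodule O ⊓ traceZeroSubmodule R F a b) :=
    (LinearEquiv.ofEq _ _ hNM.symm).trans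
      (Submodule.comapSubtypeEquivOfLe
        (p := Subalgebra.toSubmodule O ⊓ traceZeroSubmodule R F a b)
        (q := Subalgebra.toSubmodule O) inf_le_left)
  have heNM : ∀ x : N, ((eNM x : ℍ[F,a,b])) = ((x : O) : ℍ[F,a,b]) := fun x => rfl
  refine ⟨Module.Free.of_basis (bN.map eNM), ?_, ?_⟩
  · rw [Module.finrank_eq_card_basis (bN.map eNM), Fintype.card_fin]
  intro f
  let fN : Module.Basis (Fin 3) R ↥N := f.map eNM.symm
  let gb : Module.Basis (Fin 3 ⊕ Fin 1) R O :=
    (fN.prod bσ).map (Submodule.prodEquivOfIsCompl N (LinearMap.range σ) hcompl)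
  have hgl : ∀ i, ((gb (Sum.inl i) : O) : ℍ[F,a,b]) = ((f i : ℍ[F,a,b])) := by
    intro i
    have h1 : (gb (Sum.inl i) : O)
        = ((((fN.prod bσ) (Sum.inl i)).1 : ↥N) : O) + ((((fN.prod bσ) (Sum.inl i)).2 : ↥(LinearMap.range σ)) : O) := by
      rw [Module.Basis.map_apply]
      exact Submodule.coe_prodEquivOfIsCompl' _ _ hcompl _
    rw [Module.Basis.prod_apply_inl_fst, Module.Basis.prod_apply_inl_snd] at h1
    rw [h1]
    push_cast
    rw [add_zero]
    have h2 := heNM (eNM.symm (f i))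
    rw [LinearEquiv.apply_symm_apply] at h2
    rw [show fN i = eNM.symm (f i) from Module.Basis.map_apply _ _ _, ← h2]
  have hgr : ((gb (Sum.inr 0) : O) : ℍ[F,a,b]) = γ₀ := by
    have h1 : (gb (Sum.inr 0) : O)
        = ((((fN.prod bσ) (Sum.inr 0)).1 : ↥N) : O) + ((((fN.prod bσ) (Sum.inr 0)).2 : ↥(LinearMap.range σ)) : O) := by
      rw [Module.Basis.map_apply]
      exact Submodule.coe_prodEquivOfIsCompl' _ _ hcompl _
    rw [Module.Basis.prod_apply_inr_fst, Module.Basis.prod_apply_inr_snd] at h1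
    have h2 : (bσ 0 : O) = γ' := by
      show ((((Module.Basis.singleton (Fin 1) R).map (LinearEquiv.ofInjective σ hσinj)) 0 : _) : O) = γ'
      rw [Module.Basis.map_apply, Module.Basis.singleton_apply, LinearEquiv.ofInjective_apply]
      show (1 : R) • γ' = γ'
      rw [one_smul]
    rw [h2] at h1
    rw [h1]
    push_cast
    rw [zero_add]
  -- express the trace-zero part of γ₀ in terms of f
  have hf0 : ∀ j, trd ((f j : ℍ[F,a,b])) = 0 := fun j => (f j).2.2
  set W := Submodule.span F (Set.range fun i => (f i : ℍ[F,a,b])) with hWdef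
  have hMW : ∀ x ∈ Subalgebra.toSubmodule O ⊓ traceZeroSubmodule R F a b, x ∈ W := by
    intro x hx
    set xx : ↥(Subalgebra.toSubmodule O ⊓ traceZeroSubmodule R F a b) := ⟨x, hx⟩ with hxx
    have hrep := f.sum_repr xx
    have := congrArg (fun y => ((y : ↥(Subalgebra.toSubmodule O ⊓ traceZeroSubmodule R F a b)) : ℍ[F,a,b])) hrep
    show ((xx : _) : ℍ[F,a,b]) ∈ W
    rw [← this]
    push_cast
    refine Submodule.sum_mem _ fun i _ => ?_
    rw [← algebraMap_smul F (f.repr xx i) ((f i : ℍ[F,a,b]))]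
    exact Submodule.smul_mem _ _ (Submodule.subset_span (Set.mem_range_self i))
  have htz : ∀ x ∈ W, trd x = 0 := by
    intro x hx
    have hle : W ≤ LinearMap.ker (trdₗ F a b) := by
      rw [hWdef]
      refine Submodule.span_le.mpr ?_
      rintro y ⟨i, rfl⟩
      exact hf0 i
    exact hle hx
  have hOsub : ∀ x ∈ (O : Set ℍ[F,a,b]), x ∈ W ⊔ Submodule.span F ({γ₀} : Set ℍ[F,a,b]) := by
    intro x hx
    obtain ⟨r, hr⟩ := hTrd ⟨x, hx⟩
    refine Submodule.mem_sup.mpr ⟨x - algebraMap R F r • γ₀, ?_, algebraMap R F r • γ₀,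
      Submodule.smul_mem _ _ (Submodule.mem_span_singleton_self γ₀), by abel⟩
    refine hMW _ ⟨?_, ?_⟩
    · rw [algebraMap_smul]
      exact sub_mem hx (Subalgebra.smul_mem O hγ₀O r)
    · show trd (x - algebraMap R F r • γ₀) = 0
      rw [← trdₗ_apply, map_sub, map_smul, trdₗ_apply, trdₗ_apply, hγ₀, smul_eq_mul, mul_one]
      rw [show trd x = algebraMap R F r from hr.symm, sub_self]
  have htop : W ⊔ Submodule.span F ({γ₀} : Set ℍ[F,a,b]) = ⊤ := by
    rw [eq_top_iff, ← hspan]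
    exact Submodule.span_le.mpr hOsub
  set v : ℍ[F,a,b] := γ₀ - (2⁻¹ : F) • 1 with hvdef
  have htrdv : trd v = 0 := by
    rw [hvdef, ← trdₗ_apply, map_sub, map_smul, trdₗ_apply, trdₗ_apply, hγ₀, my_trd_one,
      smul_eq_mul]
    rw [inv_mul_cancel₀ (two_ne_zero (α := F))]
    ring
  have hvW : v ∈ W := by
    have hvtop : v ∈ W ⊔ Submodule.span F ({γ₀} : Set ℍ[F,a,b]) := htop ▸ Submodule.mem_top
    obtain ⟨w, hw, z, hz, hwz⟩ := Submodule.mem_sup.mp hvtop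
    obtain ⟨c, rfl⟩ := Submodule.mem_span_singleton.mp hz
    have hc : c = 0 := by
      have h0 : trd v = trd w + c * trd γ₀ := by
        rw [← hwz, ← trdₗ_apply, map_add, map_smul, trdₗ_apply, trdₗ_apply, smul_eq_mul]
      rw [htrdv, htz w hw, hγ₀, mul_one, zero_add] at h0
      exact h0.symm
    rw [← hwz, hc, zero_smul, add_zero]
    exact hw
  obtain ⟨lam, hlam⟩ := (Submodule.mem_span_range_iff_exists_fun F).mp hvW
  have hγexp : γ₀ = (2⁻¹ : F) • 1 + ∑ i, lam i • (f i : ℍ[F,a,b]) := by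
    rw [hlam, hvdef]
    abel
  have hkey : ∀ y : ℍ[F,a,b], trd (γ₀ * y)
      = (∑ i, lam i * trd ((f i : ℍ[F,a,b]) * y)) + 2⁻¹ * trd y := by
    intro y
    conv_lhs => rw [hγexp, add_mul, Finset.sum_mul]
    rw [← trdₗ_apply, map_add, smul_mul_assoc, map_smul, map_sum]
    simp only [smul_mul_assoc, map_smul, trdₗ_apply, smul_eq_mul]
    rw [one_mul]
    ring
  -- Gram matrices
  set G3 : Matrix (Fin 3) (Fin 3) F :=
    Matrix.of (fun i j : Fin 3 => trd ((f i : ℍ[F,a,b]) * (f j : ℍ[F,a,b]))) with hG3def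
  set Gg : Matrix (Fin 3 ⊕ Fin 1) (Fin 3 ⊕ Fin 1) F :=
    Matrix.of (fun i j => trd (((gb i : O) : ℍ[F,a,b]) * ((gb j : O) : ℍ[F,a,b]))) with hGgdef
  -- row reduction: det Gg = det G3 * 2⁻¹
  have hsum3 : ∀ y : ℍ[F,a,b], trd (γ₀ * y) - (lam 0 * trd ((f 0 : ℍ[F,a,b]) * y)
      + lam 1 * trd ((f 1 : ℍ[F,a,b]) * y) + lam 2 * trd ((f 2 : ℍ[F,a,b]) * y))
      = 2⁻¹ * trd y := by
    intro y
    rw [hkey y, Fin.sum_univ_three]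
    ring
  have hdetGg : Gg.det = G3.det * 2⁻¹ := by
    have hne : ∀ i : Fin 3, (Sum.inr 0 : Fin 3 ⊕ Fin 1) ≠ Sum.inl i := fun i => by simp
    set A1 := Matrix.updateRow Gg (Sum.inr 0) (Gg (Sum.inr 0) + (-lam 0) • Gg (Sum.inl 0))
      with hA1
    set A2 := Matrix.updateRow A1 (Sum.inr 0) (A1 (Sum.inr 0) + (-lam 1) • A1 (Sum.inl 1))
      with hA2
    set A3 := Matrix.updateRow A2 (Sum.inr 0) (A2 (Sum.inr 0) + (-lam 2) • A2 (Sum.inl 2))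
      with hA3
    have hd : A3.det = Gg.det := by
      rw [hA3, Matrix.det_updateRow_add_smul_self A2 (hne 2), hA2,
        Matrix.det_updateRow_add_smul_self A1 (hne 1), hA1,
        Matrix.det_updateRow_add_smul_self Gg (hne 0)]
    have hA1row : ∀ i : Fin 3, ∀ j, A1 (Sum.inl i) j = Gg (Sum.inl i) j := fun i j => by
      rw [hA1, Matrix.updateRow_ne (Ne.symm (hne i))]
    have hA2row : ∀ i : Fin 3, ∀ j, A2 (Sum.inl i) j = Gg (Sum.inl i) j := fun i j => by
      rw [hA2, Matrix.updateRow_ne (Ne.symm (hne i)), hA1row]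
    have hA3row : ∀ i : Fin 3, ∀ j, A3 (Sum.inl i) j = Gg (Sum.inl i) j := fun i j => by
      rw [hA3, Matrix.updateRow_ne (Ne.symm (hne i)), hA2row]
    have hA3last : ∀ j, A3 (Sum.inr 0) j = Gg (Sum.inr 0) j
        - (lam 0 * Gg (Sum.inl 0) j + lam 1 * Gg (Sum.inl 1) j + lam 2 * Gg (Sum.inl 2) j) := by
      intro j
      rw [hA3, Matrix.updateRow_self]
      simp only [Pi.add_apply, Pi.smul_apply, smul_eq_mul]
      rw [hA2row, hA2, Matrix.updateRow_self]
      simp only [Pi.add_apply, Pi.smul_apply, smul_eq_mul]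
      rw [hA1row, hA1, Matrix.updateRow_self]
      simp only [Pi.add_apply, Pi.smul_apply, smul_eq_mul]
      ring
    have hblocks : A3 = Matrix.fromBlocks G3
        (Matrix.of fun (i : Fin 3) (_ : Fin 1) => trd ((f i : ℍ[F,a,b]) * γ₀)) 0
        (Matrix.of fun (_ _ : Fin 1) => (2⁻¹ : F)) := by
      ext i j
      rcases i with i | i
      · rcases j with j | j
        · rw [hA3row]
          show trd (((gb (Sum.inl i) : O) : ℍ[F,a,b]) * ((gb (Sum.inl j) : O) : ℍ[F,a,b])) = _
          rw [hgl i, hgl j]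
          rfl
        · rw [hA3row]
          show trd (((gb (Sum.inl i) : O) : ℍ[F,a,b]) * ((gb (Sum.inr j) : O) : ℍ[F,a,b])) = _
          rw [hgl i, Fin.fin_one_eq_zero j, hgr]
          rfl
      · rw [Fin.fin_one_eq_zero i]
        rcases j with j | j
        · rw [hA3last]
          have hGgr : ∀ k, Gg (Sum.inr 0) k = trd (γ₀ * ((gb k : O) : ℍ[F,a,b])) := fun k => by
            show trd (((gb (Sum.inr 0) : O) : ℍ[F,a,b]) * _) = _
            rw [hgr]
          have hGgl : ∀ (i' : Fin 3) k,
              Gg (Sum.inl i') k = trd ((f i' : ℍ[F,a,b]) * ((gb k : O) : ℍ[F,a,b])) := fun i' k => by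
            show trd (((gb (Sum.inl i') : O) : ℍ[F,a,b]) * _) = _
            rw [hgl]
          rw [hGgr, hGgl, hGgl, hGgl, hsum3]
          show 2⁻¹ * trd (((gb (Sum.inl j) : O) : ℍ[F,a,b])) = _
          rw [hgl j, hf0 j, mul_zero]
          rfl
        · rw [Fin.fin_one_eq_zero j, hA3last]
          have hGgr : ∀ k, Gg (Sum.inr 0) k = trd (γ₀ * ((gb k : O) : ℍ[F,a,b])) := fun k => by
            show trd (((gb (Sum.inr 0) : O) : ℍ[F,a,b]) * _) = _
            rw [hgr]
          have hGgl : ∀ (i' : Fin 3) k,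
              Gg (Sum.inl i') k = trd ((f i' : ℍ[F,a,b]) * ((gb k : O) : ℍ[F,a,b])) := fun i' k => by
            show trd (((gb (Sum.inl i') : O) : ℍ[F,a,b]) * _) = _
            rw [hgl]
          rw [hGgr, hGgl, hGgl, hGgl, hsum3]
          show 2⁻¹ * trd (((gb (Sum.inr 0) : O) : ℍ[F,a,b])) = _
          rw [hgr, hγ₀, mul_one]
          rfl
    rw [← hd, hblocks, Matrix.det_fromBlocks_zero₂₁, Matrix.det_fin_one]
    rfl
  -- change of basis from the adapted basis to e
  let gB : Module.Basis (Fin 4) R O := gb.reindex finSumFinEquiv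
  let P : Matrix (Fin 4) (Fin 4) R := gB.toMatrix ⇑e
  have hrep : ∀ j, ((e j : O) : ℍ[F,a,b]) = ∑ i, P i j • ((gB i : O) : ℍ[F,a,b]) := by
    intro j
    have h1 : (∑ i, P i j • gB i) = e j := gB.sum_toMatrix_smul_self ⇑e j
    have h2 := congrArg (O.val.toLinearMap) h1
    rw [map_sum] at h2
    simp only [map_smul] at h2
    exact h2.symm
  have hA := gram_change (R := R) (fun i => ((gB i : O) : ℍ[F,a,b]))
    (fun j => ((e j : O) : ℍ[F,a,b])) P hrep
  set Gg4 : Matrix (Fin 4) (Fin 4) F :=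
    Matrix.of (fun i l => trd (((gB i : O) : ℍ[F,a,b]) * ((gB l : O) : ℍ[F,a,b]))) with hGg4def
  have hGg4 : Gg4.det = Gg.det := by
    have hre : Gg4 = (Matrix.reindex finSumFinEquiv finSumFinEquiv) Gg := by
      ext i j
      rw [Matrix.reindex_apply, Matrix.submatrix_apply]
      show trd (((gB i : O) : ℍ[F,a,b]) * ((gB j : O) : ℍ[F,a,b])) = _
      rw [show gB i = gb (finSumFinEquiv.symm i) from gb.reindex_apply finSumFinEquiv i,
        show gB j = gb (finSumFinEquiv.symm j) from gb.reindex_apply finSumFinEquiv j]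
      rfl
    rw [hre, Matrix.det_reindex_self]
  have hPunit : IsUnit P.det := by
    have h1 : P * (e.toMatrix ⇑gB) = 1 := Module.Basis.toMatrix_mul_toMatrix_flip gB e
    exact IsUnit.of_mul_eq_one _ (by rw [← Matrix.det_mul, h1, Matrix.det_one])
  have hGe : (Matrix.of fun i j : Fin 4 =>
      trd ((e i : ℍ[F,a,b]) * (e j : ℍ[F,a,b]))).det
      = algebraMap R F P.det * algebraMap R F P.det * (G3.det * 2⁻¹) := by
    rw [show (Matrix.of fun i j : Fin 4 => trd ((e i : ℍ[F,a,b]) * (e j : ℍ[F,a,b])))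
      = (P.map (algebraMap R F)).transpose * Gg4 * (P.map (algebraMap R F)) from hA]
    rw [Matrix.det_mul, Matrix.det_mul, Matrix.det_transpose,
      show (P.map (algebraMap R F)).det = algebraMap R F P.det from
        (RingHom.map_det (algebraMap R F) P).symm,
      hGg4, hdetGg]
    ring
  have h2Ge : 2 * (Matrix.of fun i j : Fin 4 =>
      trd ((e i : ℍ[F,a,b]) * (e j : ℍ[F,a,b]))).det = (P.det * P.det) • G3.det := by
    rw [hGe, Algebra.smul_def, map_mul]
    calc 2 * (algebraMap R F P.det * algebraMap R F P.det * (G3.det * 2⁻¹))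
        = algebraMap R F P.det * algebraMap R F P.det * G3.det * (2 * 2⁻¹) := by ring
      _ = _ := by rw [mul_inv_cancel₀ (two_ne_zero (α := F)), mul_one]
  rw [h2Ge, Submodule.span_singleton_smul_eq (hPunit.mul hPunit) G3.det]
end

section
/- Let a, b be nonzero rational numbers and B = ℍ[ℚ,a,b]. Let O be a ℤ-order in B with ℤ-basis e₁, e₂, e₃, e₄. If the integer det(trd(e_i · e_j))_{1≤i,j≤4} is odd, then there exists γ₀ ∈ O with trd(γ₀) = 1. -/
set_option synthInstance.maxHeartbeats 800000
set_option maxHeartbeats 1600000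

open Quaternion

/-- `trd` as a `ℤ`-linear map. -/
noncomputable def trdL (a b : ℚ) : ℍ[ℚ, a, b] →ₗ[ℤ] ℚ where
  toFun x := QuaternionAlgebra.trd x
  map_add' x y := by
    simp only [QuaternionAlgebra.trd, star_add, QuaternionAlgebra.re_add]
    ring
  map_smul' n x := by
    show ((n • x) + star (n • x)).re = n • (x + star x).re
    rw [star_zsmul, ← smul_add]
    rfl

theorem trd_sum {a b : ℚ} (n : Fin 4 → ℤ) (v : Fin 4 → ℍ[ℚ, a, b]) :
    QuaternionAlgebra.trd (∑ i, n i • v i) = ∑ i, (n i : ℚ) * QuaternionAlgebra.trd (v i) := by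
  have : QuaternionAlgebra.trd (∑ i, n i • v i) = trdL a b (∑ i, n i • v i) := rfl
  rw [this, map_sum]
  exact Finset.sum_congr rfl fun i _ => by
    rw [map_zsmul, zsmul_eq_mul]; rfl

theorem trd_one {a b : ℚ} : QuaternionAlgebra.trd (1 : ℍ[ℚ, a, b]) = 2 := by
  simp [QuaternionAlgebra.trd]
  norm_num

open QuaternionAlgebra in
/-- Let `a, b` be nonzero rationals, `B = ℍ[ℚ,a,b]`, and `O` a `ℤ`-order in `B` with `ℤ`-basis
`e₁, e₂, e₃, e₄`. If the integer `det (trd (eᵢ * eⱼ))` is odd, then `O` contains an element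
`γ₀` of reduced trace `1`. -/
theorem exists_trace_one_of_odd_discr
    (a b : ℚ) (ha : a ≠ 0) (hb : b ≠ 0)
    (O : Subalgebra ℤ ℍ[ℚ, a, b])
    (hspan : Submodule.span ℚ (O : Set ℍ[ℚ, a, b]) = ⊤)
    (e : Module.Basis (Fin 4) ℤ O)
    (d : ℤ)
    (hd : (d : ℚ) =
      (Matrix.of fun i j : Fin 4 => trd ((e i : ℍ[ℚ, a, b]) * (e j : ℍ[ℚ, a, b]))).det)
    (hodd : Odd d) :
    ∃ γ₀ ∈ O, trd γ₀ = 1 := by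
  classical
  set t : Fin 4 → ℚ := fun i => trd (e i : ℍ[ℚ, a, b]) with ht
  -- every element of O has trace an ℤ-combination of the t i
  have coe_sum : ∀ (n : Fin 4 → ℤ) (x : Fin 4 → O),
      ((∑ i, n i • x i : O) : ℍ[ℚ, a, b]) = ∑ i, n i • (x i : ℍ[ℚ, a, b]) := by
    intro n x
    have : ((∑ i, n i • x i : O) : ℍ[ℚ, a, b]) = O.val (∑ i, n i • x i) := rfl
    rw [this, map_sum]
    exact Finset.sum_congr rfl fun i _ => map_zsmul O.val _ _
  have key : ∀ x : O, ∃ n : Fin 4 → ℤ,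
      trd (x : ℍ[ℚ, a, b]) = ∑ i, (n i : ℚ) * t i := by
    intro x
    refine ⟨fun i => e.repr x i, ?_⟩
    have hx : (x : ℍ[ℚ, a, b]) = ∑ i, (e.repr x i) • (e i : ℍ[ℚ, a, b]) := by
      conv_lhs => rw [← e.sum_repr x]
      exact coe_sum _ _
    rw [hx, trd_sum]
  -- common denominator
  set q : ℤ := ∏ i, ((t i).den : ℤ) with hqdef
  have hq0 : q ≠ 0 := by
    rw [hqdef]
    exact Finset.prod_ne_zero_iff.mpr fun i _ => Int.natCast_ne_zero.mpr (t i).den_nz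
  set P : Fin 4 → ℤ := fun i => (t i).num * ∏ j ∈ Finset.univ.erase i, ((t j).den : ℤ) with hPdef
  have hP : ∀ i, (P i : ℚ) = q * t i := by
    intro i
    have h1 : q = ((t i).den : ℤ) * ∏ j ∈ Finset.univ.erase i, ((t j).den : ℤ) :=
      (Finset.mul_prod_erase Finset.univ _ (Finset.mem_univ i)).symm
    have hden : ((t i).den : ℚ) ≠ 0 := by exact_mod_cast (t i).den_nz
    have h2 : t i * ((t i).den : ℚ) = ((t i).num : ℚ) := by
      rw [eq_comm, ← div_eq_iff hden]
      exact Rat.num_div_den (t i)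
    rw [hPdef, h1]
    push_cast
    linear_combination (-(∏ j ∈ Finset.univ.erase i, ((t j).den : ℚ))) * h2
  set g : ℤ := Finset.gcd Finset.univ P with hgdef
  have keyC : ∀ x : O, ∃ m : ℤ, (m : ℚ) = q * trd (x : ℍ[ℚ, a, b]) ∧ g ∣ m := by
    intro x
    obtain ⟨n, hn⟩ := key x
    refine ⟨∑ i, n i * P i, ?_, ?_⟩
    · push_cast
      rw [hn, Finset.mul_sum]
      exact Finset.sum_congr rfl fun i _ => by rw [hP i]; ring
    · exact Finset.dvd_sum fun i _ =>
        Dvd.dvd.mul_left (Finset.gcd_dvd (Finset.mem_univ i)) _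
  -- g ∣ 2q, from trd 1 = 2
  have hg2q : g ∣ 2 * q := by
    obtain ⟨m, hm, hgm⟩ := keyC 1
    have : (m : ℚ) = ((2 * q : ℤ) : ℚ) := by
      rw [hm]
      have : ((1 : O) : ℍ[ℚ, a, b]) = 1 := rfl
      rw [this, trd_one]
      push_cast
      ring
    rwa [Int.cast_injective this] at hgm
  obtain ⟨s, hs⟩ := hg2q
  -- matrix of traces
  have keyM : ∀ i j : Fin 4, ∃ m : ℤ,
      (m : ℚ) = q * trd ((e i : ℍ[ℚ, a, b]) * (e j : ℍ[ℚ, a, b])) ∧ g ∣ m := by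
    intro i j
    obtain ⟨m, hm, hgm⟩ := keyC (e i * e j)
    refine ⟨m, ?_, hgm⟩
    rw [hm]
    congr 2
  choose m hm hgm using keyM
  choose m' hm' using fun i j => hgm i j
  have hdetZ : (Matrix.of m).det = q ^ 4 * d := by
    have hcast : ((Matrix.of m).map (Int.cast : ℤ → ℚ)) =
        ((q : ℚ)) • (Matrix.of fun i j : Fin 4 => trd ((e i : ℍ[ℚ, a, b]) * (e j : ℍ[ℚ, a, b]))) := by
      ext i j
      simp only [Matrix.map_apply, Matrix.smul_apply, Matrix.of_apply, hm i j,
        smul_eq_mul]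
    have h1 : (((Matrix.of m).det : ℤ) : ℚ) = ((q : ℚ) ^ 4) * (d : ℚ) := by
      have h0 : (((Matrix.of m).det : ℤ) : ℚ) = (Int.castRingHom ℚ) (Matrix.of m).det := rfl
      rw [h0, RingHom.map_det (Int.castRingHom ℚ)]
      have h2 : (Int.castRingHom ℚ).mapMatrix (Matrix.of m) =
          (Matrix.of m).map (Int.cast : ℤ → ℚ) := rfl
      rw [h2, hcast, Matrix.det_smul, hd]
      simp [Fintype.card_fin]
    exact_mod_cast h1
  have hdetg : (Matrix.of m).det = g ^ 4 * (Matrix.of m').det := by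
    have : (Matrix.of m) = g • (Matrix.of m') := by
      ext i j
      simp only [Matrix.smul_apply, Matrix.of_apply, hm' i j, smul_eq_mul]
    rw [this, Matrix.det_smul]
    simp [Fintype.card_fin]
  set k : ℤ := (Matrix.of m').det with hkdef
  have hqd : q ^ 4 * d = g ^ 4 * k := by rw [← hdetZ, hdetg]
  have h16 : 16 * q ^ 4 = g ^ 4 * s ^ 4 := by
    have h : (2 * q) ^ 4 = (g * s) ^ 4 := by rw [hs]
    linear_combination h
  have hsd : s ^ 4 * d = 16 * k := by
    have hcancel : q ^ 4 * (s ^ 4 * d) = q ^ 4 * (16 * k) := by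
      linear_combination s ^ 4 * hqd - k * h16
    exact mul_left_cancel₀ (pow_ne_zero 4 hq0) hcancel
  -- s is even
  have hg0 : g ≠ 0 := by
    intro h
    rw [h, zero_mul] at hs
    omega
  have hseven : Even s := by
    rcases Int.even_or_odd s with h | h
    · exact h
    · exfalso
      have hodd4 : Odd (s ^ 4 * d) := (h.pow).mul hodd
      rw [hsd] at hodd4
      have : Even (16 * k) := ⟨8 * k, by ring⟩
      exact (Int.not_odd_iff_even.mpr this) hodd4
  obtain ⟨s', hs'⟩ := hseven
  have hgq : q = g * s' := by
    have : 2 * q = 2 * (g * s') := by rw [hs, hs']; ring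
    omega
  -- Bezout via principal ideals
  have hmem : q ∈ Ideal.span (Set.range P) := by
    obtain ⟨α, hα⟩ := (IsPrincipalIdealRing.principal (Ideal.span (Set.range P))).principal
    have hαP : ∀ i, α ∣ P i := by
      intro i
      have hPi : P i ∈ Ideal.span (Set.range P) := Ideal.subset_span ⟨i, rfl⟩
      rw [hα] at hPi
      exact Ideal.mem_span_singleton.mp hPi
    have hαg : α ∣ g := Finset.dvd_gcd fun i _ => hαP i
    have hαq : α ∣ q := by rw [hgq]; exact hαg.mul_right s'
    rw [hα]
    exact Ideal.mem_span_singleton.mpr hαq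
  obtain ⟨c, hc⟩ := (Submodule.mem_span_range_iff_exists_fun ℤ).mp hmem
  -- final element
  refine ⟨((∑ i, c i • e i : O) : ℍ[ℚ, a, b]), (∑ i, c i • e i : O).2, ?_⟩
  have h1 : trd ((∑ i, c i • e i : O) : ℍ[ℚ, a, b]) = ∑ i, (c i : ℚ) * t i := by
    rw [coe_sum, trd_sum]
  rw [h1]
  have hq0' : (q : ℚ) ≠ 0 := Int.cast_ne_zero.mpr hq0
  have : (q : ℚ) * (∑ i, (c i : ℚ) * t i) = (q : ℚ) * 1 := by
    rw [Finset.mul_sum, mul_one]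
    have : ∑ i, (q : ℚ) * ((c i : ℚ) * t i) = ∑ i, (c i : ℚ) * (P i : ℚ) := by
      exact Finset.sum_congr rfl fun i _ => by rw [hP i]; ring
    rw [this]
    exact_mod_cast congrArg (Int.cast : ℤ → ℚ) (by simpa [smul_eq_mul] using hc)
  exact mul_left_cancel₀ hq0' this
end

section
/- Let M be the symmetric 9×9 integer matrix with rows (−12, 6, −12, 0, 0, 0, −6, 0, −12), (6, −12, 6, 0, 0, 0, 0, −12, −6), (−12, 6, −30, 0, 0, 0, −12, −6, −36), (0, 0, 0, 0, 12, 6, 3, 24, 18), (0, 0, 0, 12, 6, 36, 24, 18, 75), (0, 0, 0, 6, 36, 30, 18, 75, 78), (−6, 0, −12, 3, 24, 18, 6, 48, 36), (0, −12, −6, 24, 18, 75, 48, 36, 150), (−12, −6, −36, 18, 75, 78, 36, 150, 156). Then det M = −2³·3¹², and the cokernel of the ℤ-linear map ℤ⁹ → ℤ⁹ given by M is isomorphic, as an abelian group, to (ℤ/2ℤ)³ × (ℤ/3ℤ)⁶ × (ℤ/9ℤ)³. -/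
/-- The Gram matrix of the canonical lattice `Λ_can = Cor_{K/ℚ} (O ∩ B⁰)` for the quaternion
`B = (-3, β / K)` over the totally real cubic subfield `K` of `ℚ(ζ₉)`. -/
def mumfordGram : Matrix (Fin 9) (Fin 9) ℤ :=
  !![-12, 6, -12, 0, 0, 0, -6, 0, -12;
     6, -12, 6, 0, 0, 0, 0, -12, -6;
     -12, 6, -30, 0, 0, 0, -12, -6, -36;
     0, 0, 0, 0, 12, 6, 3, 24, 18;
     0, 0, 0, 12, 6, 36, 24, 18, 75;
     0, 0, 0, 6, 36, 30, 18, 75, 78;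
     -6, 0, -12, 3, 24, 18, 6, 48, 36;
     0, -12, -6, 24, 18, 75, 48, 36, 150;
     -12, -6, -36, 18, 75, 78, 36, 150, 156]

namespace MumfordAux

/-- Lower-triangular integer matrix for fraction-free elimination. -/
def Elim : Matrix (Fin 9) (Fin 9) ℤ :=
  !![1, 0, 0, 0, 0, 0, 0, 0, 0;
  1, 2, 0, 0, 0, 0, 0, 0, 0;
  -1, 0, 1, 0, 0, 0, 0, 0, 0;
  0, 0, 0, 1, 0, 0, 0, 0, 0;
  0, 0, 0, 0, 1, 0, 0, 0, 0;
  0, 0, 0, -2, -11, 4, 0, 0, 0;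
  -2, -2, -2, 0, -3, -3, 6, 0, 0;
  4, -2, 4, -12, 6, 9, -18, 6, 0;
  22, 4, -8, 9, 48, -18, -84, -12, 30]

/-- Upper-triangular result of the elimination. -/
def Tri : Matrix (Fin 9) (Fin 9) ℤ :=
  !![-12, 6, -12, 0, 0, 0, -6, 0, -12;
  0, -18, 0, 0, 0, 0, -6, -24, -24;
  0, 0, -18, 0, 0, 0, -6, -6, -24;
  0, 0, 0, 12, 6, 36, 24, 18, 75;
  0, 0, 0, 0, 12, 6, 3, 24, 18;
  0, 0, 0, 0, 0, -18, -9, 0, -36;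
  0, 0, 0, 0, 0, 0, 9, 27, 36;
  0, 0, 0, 0, 0, 0, 0, -45, -18;
  0, 0, 0, 0, 0, 0, 0, 0, -9]

/-- Left unimodular transform for the Smith normal form. -/
def U : Matrix (Fin 9) (Fin 9) ℤ :=
  !![0, 0, 0, 1, 0, 0, 0, 0, 0;
  0, 0, 0, -2, 0, 0, 1, 0, 0;
  0, 0, 2, 8, 0, 0, -6, 0, 1;
  0, 0, -6, -24, 0, 0, 28, 1, -6;
  0, 0, 24, 98, 0, -1, -62, 2, 8;
  -2, 0, -24, -102, 1, 1, 70, -2, -10;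
  -60, 0, -147, -720, 30, 6, 604, -14, -104;
  -3, 0, 78, 314, 2, -4, -192, 6, 24;
  -1, -1, 188, 758, -4, -4, -480, 18, 60]

def U' : Matrix (Fin 9) (Fin 9) ℤ :=
  !![-2, 0, 0, -2, 42, 58, -2, 1, 0;
  0, 0, 16, 12, -186, -286, 10, -9, -1;
  -4, 0, 8, 2, -24, -30, 1, 0, 0;
  1, 0, 0, 0, 0, 0, 0, 0, 0;
  8, 4, -30, -12, 181, 237, -8, 2, 0;
  6, 2, -12, -6, 95, 120, -4, 0, 0;
  2, 1, 0, 0, 0, 0, 0, 0, 0;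
  16, 8, -42, -11, 144, 180, -6, 0, 0;
  12, 6, -15, -4, 48, 60, -2, 0, 0]

/-- Right unimodular transform for the Smith normal form. -/
def V : Matrix (Fin 9) (Fin 9) ℤ :=
  !![0, 0, 0, 0, 0, 0, 1, -10, 5;
  0, 0, -4, -3, 49, 69, -14, 5, 2;
  0, 0, 0, 0, 6, -4, 1, -7, -4;
  0, 1, 0, -2, 44, 44, -6, -36, 10;
  0, 0, 1, 0, 0, 2, 0, -6, 4;
  0, 0, 0, 1, -10, -30, 6, -6, -8;
  1, 0, -4, -2, 18, 38, -12, 52, -16;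
  0, 0, 0, 0, 1, -2, 0, 4, -4;
  0, 0, 0, 0, -1, 5, 0, -8, 8]

def V' : Matrix (Fin 9) (Fin 9) ℤ :=
  !![0, 0, 0, 0, 4, 2, 1, 8, 6;
  -2, 0, -4, 1, 0, 2, 0, 0, 0;
  0, 2, -8, 0, 9, 6, 0, 14, 4;
  -8, -4, 18, 0, -16, -11, 0, -20, 2;
  -4, 24, -92, 0, 96, 72, 0, 143, 46;
  4, -24, 92, 0, -96, -72, 0, -141, -45;
  6, -25, 95, 0, -100, -75, 0, -140, -45;
  -2, 13, -50, 0, 52, 39, 0, 78, 25;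
  -5, 31, -119, 0, 124, 93, 0, 184, 59]

/-- Diagonal entries of the Smith normal form: six `3`s and three `18`s. -/
def d : Fin 9 → ℤ := fun i => if (i : ℕ) < 6 then 3 else 18

/-- The Smith normal form of `mumfordGram`. -/
def D : Matrix (Fin 9) (Fin 9) ℤ := Matrix.diagonal d

lemma hUMV : U * mumfordGram * V = D := by decide

/-- `mumfordGram` with rows 3 and 4 swapped. -/
def Msw : Matrix (Fin 9) (Fin 9) ℤ :=
  !![-12, 6, -12, 0, 0, 0, -6, 0, -12;
     6, -12, 6, 0, 0, 0, 0, -12, -6;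
     -12, 6, -30, 0, 0, 0, -12, -6, -36;
     0, 0, 0, 12, 6, 36, 24, 18, 75;
     0, 0, 0, 0, 12, 6, 3, 24, 18;
     0, 0, 0, 6, 36, 30, 18, 75, 78;
     -6, 0, -12, 3, 24, 18, 6, 48, 36;
     0, -12, -6, 24, 18, 75, 48, 36, 150;
     -12, -6, -36, 18, 75, 78, 36, 150, 156]

lemma hswap : mumfordGram.submatrix ⇑(Equiv.swap (3 : Fin 9) 4) id = Msw := by decide

lemma hEM : Elim * Msw = Tri := by decide

lemma hElim_lt : ∀ i j : Fin 9, i < j → Elim i j = 0 := by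
  intro i j h; fin_cases i <;> fin_cases j <;> simp_all [Elim]

lemma hTri_lt : ∀ i j : Fin 9, j < i → Tri i j = 0 := by
  intro i j h; fin_cases i <;> fin_cases j <;> simp_all [Tri]

lemma hElim_det : Elim.det = 8640 := by
  rw [Matrix.det_of_lowerTriangular Elim (fun i j h => hElim_lt i j h)]
  decide

lemma hTri_det : Tri.det = 36733201920 := by
  rw [Matrix.det_of_upperTriangular (M := Tri) (fun i j h => hTri_lt i j h)]
  decide

lemma hUU' : U * U' = 1 := by decide
lemma hU'U : U' * U = 1 := by decide
lemma hVV' : V * V' = 1 := by decide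
lemma hV'V : V' * V = 1 := by decide

abbrev G := (Fin 3 → ZMod 2) × (Fin 6 → ZMod 3) × (Fin 3 → ZMod 9)

def i6 : Fin 6 → Fin 9 := fun j => ⟨j.1, by omega⟩
def i3 : Fin 3 → Fin 9 := fun j => ⟨j.1 + 6, by omega⟩

def φ₀ : (Fin 9 → ℤ) →+ G where
  toFun v := (fun j => ((v (i3 j) : ℤ) : ZMod 2),
              fun j => ((v (i6 j) : ℤ) : ZMod 3),
              fun j => ((v (i3 j) : ℤ) : ZMod 9))
  map_zero' := by
    refine Prod.ext ?_ (Prod.ext ?_ ?_) <;> funext j <;> simp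
  map_add' u v := by
    refine Prod.ext ?_ (Prod.ext ?_ ?_) <;> funext j <;> push_cast <;> simp

def φ : (Fin 9 → ℤ) →ₗ[ℤ] G := φ₀.toIntLinearMap

end MumfordAux

lemma mumford_det : mumfordGram.det = -(2 ^ 3 * 3 ^ 12) := by
  have h5 := Matrix.det_mul MumfordAux.Elim MumfordAux.Msw
  have hEM2 : @HMul.hMul _ _ _
      (@Matrix.instHMulOfFintypeOfMulOfAddCommMonoid (Fin 9) (Fin 9) (Fin 9) ℤ (Fin.fintype 9)
        (@NonUnitalNonAssocRing.toMul ℤ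
          (@NonUnitalNonAssocCommRing.toNonUnitalNonAssocRing ℤ
            (@NonUnitalCommRing.toNonUnitalNonAssocCommRing ℤ
              (@CommRing.toNonUnitalCommRing ℤ Int.instCommRing))))
        (@NonUnitalNonAssocSemiring.toAddCommMonoid ℤ
          (@NonUnitalNonAssocCommSemiring.toNonUnitalNonAssocSemiring ℤ
            (@NonUnitalNonAssocCommRing.toNonUnitalNonAssocCommSemiring ℤ
              (@NonUnitalCommRing.toNonUnitalNonAssocCommRing ℤ
                (@CommRing.toNonUnitalCommRing ℤ Int.instCommRing))))))
      MumfordAux.Elim MumfordAux.Msw = MumfordAux.Tri := by decide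
  rw [hEM2] at h5
  rw [MumfordAux.hElim_det, MumfordAux.hTri_det] at h5
  have hMsw : MumfordAux.Msw.det = ((-1 : ℤˣ) : ℤ) * mumfordGram.det := by
    have h := Matrix.det_permute (Equiv.swap (3 : Fin 9) 4) mumfordGram
    rw [Equiv.Perm.sign_swap (by decide), MumfordAux.hswap] at h
    exact h
  rw [hMsw] at h5
  simp only [Units.val_neg, Units.val_one, neg_one_mul] at h5
  omega

lemma mumford_coker :
    Nonempty (((Fin 9 → ℤ) ⧸ LinearMap.range (Matrix.toLin' mumfordGram)) ≃+
      ((Fin 3 → ZMod 2) × (Fin 6 → ZMod 3) × (Fin 3 → ZMod 9))) := by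
  have hUid : Matrix.toLin' MumfordAux.U ∘ₗ Matrix.toLin' MumfordAux.U' = LinearMap.id := by
    rw [← Matrix.toLin'_mul, MumfordAux.hUU', Matrix.toLin'_one]
  have hU'id : Matrix.toLin' MumfordAux.U' ∘ₗ Matrix.toLin' MumfordAux.U = LinearMap.id := by
    rw [← Matrix.toLin'_mul, MumfordAux.hU'U, Matrix.toLin'_one]
  have hVid : Matrix.toLin' MumfordAux.V ∘ₗ Matrix.toLin' MumfordAux.V' = LinearMap.id := by
    rw [← Matrix.toLin'_mul, MumfordAux.hVV', Matrix.toLin'_one]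
  have hV'id : Matrix.toLin' MumfordAux.V' ∘ₗ Matrix.toLin' MumfordAux.V = LinearMap.id := by
    rw [← Matrix.toLin'_mul, MumfordAux.hV'V, Matrix.toLin'_one]
  let eU : (Fin 9 → ℤ) ≃ₗ[ℤ] (Fin 9 → ℤ) :=
    LinearEquiv.ofLinear (Matrix.toLin' MumfordAux.U) (Matrix.toLin' MumfordAux.U') hUid hU'id
  let eV : (Fin 9 → ℤ) ≃ₗ[ℤ] (Fin 9 → ℤ) :=
    LinearEquiv.ofLinear (Matrix.toLin' MumfordAux.V) (Matrix.toLin' MumfordAux.V') hVid hV'id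
  have hrange : Submodule.map (↑eU : (Fin 9 → ℤ) →ₗ[ℤ] (Fin 9 → ℤ))
      (LinearMap.range (Matrix.toLin' mumfordGram))
      = LinearMap.range (Matrix.toLin' MumfordAux.D) := by
    have hVtop : LinearMap.range (Matrix.toLin' MumfordAux.V) = ⊤ :=
      LinearMap.range_eq_top.mpr (fun y => ⟨Matrix.toLin' MumfordAux.V' y, by
        rw [← LinearMap.comp_apply, hVid, LinearMap.id_apply]⟩)
    rw [← MumfordAux.hUMV, Matrix.toLin'_mul, Matrix.toLin'_mul, LinearMap.range_comp,
      hVtop, Submodule.map_top, LinearMap.range_comp]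
    rfl
  let e1 := Submodule.Quotient.equiv (LinearMap.range (Matrix.toLin' mumfordGram))
    (LinearMap.range (Matrix.toLin' MumfordAux.D)) eU hrange
  have hker : LinearMap.range (Matrix.toLin' MumfordAux.D) = LinearMap.ker MumfordAux.φ := by
    ext x
    simp only [LinearMap.mem_ker, LinearMap.mem_range]
    constructor
    · rintro ⟨y, rfl⟩
      refine Prod.ext ?_ (Prod.ext ?_ ?_) <;> funext j <;>
        simp only [MumfordAux.φ, MumfordAux.φ₀, AddMonoidHom.toIntLinearMap,
          LinearMap.coe_mk, AddHom.coe_mk, AddMonoidHom.coe_mk, ZeroHom.coe_mk,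
          Matrix.toLin'_apply, MumfordAux.D, Matrix.mulVec_diagonal,
          Prod.fst_zero, Prod.snd_zero, Pi.zero_apply]
      · have hd : MumfordAux.d (MumfordAux.i3 j) = 18 := by
          simp [MumfordAux.d, MumfordAux.i3]
        rw [hd]
        push_cast
        rw [show ((18 : ZMod 2)) = 0 by decide]
        simp
      · have hd : MumfordAux.d (MumfordAux.i6 j) = 3 := by
          simp [MumfordAux.d, MumfordAux.i6, j.2]
        rw [hd]
        push_cast
        rw [show ((3 : ZMod 3)) = 0 by decide]
        simp
      · have hd : MumfordAux.d (MumfordAux.i3 j) = 18 := by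
          simp [MumfordAux.d, MumfordAux.i3]
        rw [hd]
        push_cast
        rw [show ((18 : ZMod 9)) = 0 by decide]
        simp
    · intro hx
      have h2 : ∀ j : Fin 3, (2 : ℤ) ∣ x (MumfordAux.i3 j) := by
        intro j
        have := congrFun (congrArg Prod.fst hx) j
        exact_mod_cast (ZMod.intCast_zmod_eq_zero_iff_dvd _ 2).mp this
      have h3 : ∀ j : Fin 6, (3 : ℤ) ∣ x (MumfordAux.i6 j) := by
        intro j
        have := congrFun (congrArg (fun p => p.2.1) hx) j
        exact_mod_cast (ZMod.intCast_zmod_eq_zero_iff_dvd _ 3).mp this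
      have h9 : ∀ j : Fin 3, (9 : ℤ) ∣ x (MumfordAux.i3 j) := by
        intro j
        have := congrFun (congrArg (fun p => p.2.2) hx) j
        exact_mod_cast (ZMod.intCast_zmod_eq_zero_iff_dvd _ 9).mp this
      have hdvd : ∀ i : Fin 9, MumfordAux.d i ∣ x i := by
        intro i
        by_cases h : (i : ℕ) < 6
        · have : MumfordAux.d i = 3 := if_pos h
          rw [this]
          have := h3 ⟨i.1, h⟩
          have hi : MumfordAux.i6 ⟨i.1, h⟩ = i := by
            simp [MumfordAux.i6]
          rwa [hi] at this
        · have : MumfordAux.d i = 18 := if_neg h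
          rw [this]
          have hcop : IsCoprime (2 : ℤ) 9 := by
            rw [Int.isCoprime_iff_gcd_eq_one]; decide
          have hi : MumfordAux.i3 ⟨i.1 - 6, by omega⟩ = i := by
            simp only [MumfordAux.i3]
            exact Fin.ext (by simp; omega)
          have h2' := h2 ⟨i.1 - 6, by omega⟩
          have h9' := h9 ⟨i.1 - 6, by omega⟩
          rw [hi] at h2' h9'
          exact (show (18 : ℤ) = 2 * 9 by norm_num) ▸ hcop.mul_dvd h2' h9'
      refine ⟨fun i => x i / MumfordAux.d i, ?_⟩
      funext i
      rw [Matrix.toLin'_apply]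
      show (MumfordAux.D.mulVec fun i => x i / MumfordAux.d i) i = x i
      rw [MumfordAux.D, Matrix.mulVec_diagonal]
      exact Int.mul_ediv_cancel' (hdvd i)
  have hsurj : Function.Surjective MumfordAux.φ := by
    rintro ⟨a, b, c⟩
    refine ⟨fun i => if h : (i : ℕ) < 6 then ((b ⟨i.1, h⟩).val : ℤ)
      else (9 * ((a ⟨i.1 - 6, by omega⟩).val : ℤ) + 10 * ((c ⟨i.1 - 6, by omega⟩).val : ℤ)), ?_⟩
    have key : ∀ j : Fin 3, (⟨(MumfordAux.i3 j).1 - 6, by omega⟩ : Fin 3) = j := by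
      intro j; exact Fin.ext (by simp [MumfordAux.i3])
    refine Prod.ext ?_ (Prod.ext ?_ ?_) <;> funext j <;>
      simp only [MumfordAux.φ, MumfordAux.φ₀, AddMonoidHom.toIntLinearMap,
        LinearMap.coe_mk, AddHom.coe_mk, AddMonoidHom.coe_mk, ZeroHom.coe_mk]
    · have hn : ¬ ((MumfordAux.i3 j : ℕ) < 6) := by simp [MumfordAux.i3]
      rw [dif_neg hn, key j]
      push_cast
      rw [show ((9 : ZMod 2)) = 1 by decide, show ((10 : ZMod 2)) = 0 by decide]
      simp [ZMod.natCast_val, ZMod.cast_id]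
    · have hy : ((MumfordAux.i6 j : ℕ) < 6) := j.2
      rw [dif_pos hy]
      have : (⟨(MumfordAux.i6 j).1, hy⟩ : Fin 6) = j := Fin.ext rfl
      rw [this]
      push_cast
      simp [ZMod.natCast_val, ZMod.cast_id]
    · have hn : ¬ ((MumfordAux.i3 j : ℕ) < 6) := by simp [MumfordAux.i3]
      rw [dif_neg hn, key j]
      push_cast
      rw [show ((9 : ZMod 9)) = 0 by decide, show ((10 : ZMod 9)) = 1 by decide]
      simp [ZMod.natCast_val, ZMod.cast_id]
  let e2 := (Submodule.quotEquivOfEq _ _ hker).trans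
    (MumfordAux.φ.quotKerEquivOfSurjective hsurj)
  exact ⟨(e1.trans e2).toAddEquiv⟩

/-- The determinant of the Gram matrix `M` of `Λ_can` is `-2³ · 3¹²`, and the cokernel of
`M : ℤ⁹ → ℤ⁹` (the discriminant group `Λ_can⋆/Λ_can`) is isomorphic, as an abelian group, to
`(ℤ/2ℤ)³ × (ℤ/3ℤ)⁶ × (ℤ/9ℤ)³`. -/
theorem mumfordGram_det_and_cokernel :
    mumfordGram.det = -(2 ^ 3 * 3 ^ 12) ∧
    Nonempty (((Fin 9 → ℤ) ⧸ LinearMap.range (Matrix.toLin' mumfordGram)) ≃+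
      ((Fin 3 → ZMod 2) × (Fin 6 → ZMod 3) × (Fin 3 → ZMod 9))) :=
  ⟨mumford_det, mumford_coker⟩
end

section
/- The number field K = ℚ[X]/(X³ − 3X − 1) is totally real (every complex embedding of K has image contained in ℝ), and its discriminant equals 81. -/
open Polynomial

theorem cubic_irreducible_rat : Irreducible (X ^ 3 - 3 * X - 1 : ℚ[X]) := by
  have h2 : (2 : (ZMod 2)[X]) = 0 := by
    rw [show ((2 : (ZMod 2)[X])) = ((2 : ℕ) : (ZMod 2)[X]) by norm_cast,
      ← Polynomial.C_eq_natCast, show ((2 : ℕ) : ZMod 2) = 0 from rfl, map_zero]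
  have hmonicZ : (X ^ 3 - 3 * X - 1 : ℤ[X]).Monic := by monicity!
  have hmap2 : (X ^ 3 - 3 * X - 1 : ℤ[X]).map (Int.castRingHom (ZMod 2)) =
      X ^ 3 + X + 1 := by
    simp only [Polynomial.map_sub, Polynomial.map_pow, Polynomial.map_mul, Polynomial.map_X,
      Polynomial.map_ofNat, Polynomial.map_one]
    linear_combination (-2 * X - 1) * h2
  have hmonic2 : (X ^ 3 + X + 1 : (ZMod 2)[X]).Monic := by monicity!
  have hdeg2 : (X ^ 3 + X + 1 : (ZMod 2)[X]).natDegree = 3 := by compute_degree!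
  have hroots : (X ^ 3 + X + 1 : (ZMod 2)[X]).roots = 0 := by
    rw [Multiset.eq_zero_iff_forall_notMem]
    intro x hx
    rw [mem_roots hmonic2.ne_zero] at hx
    have hx' : x ^ 3 + x + 1 = 0 := by simpa [IsRoot] using hx
    fin_cases x <;> exact absurd hx' (by decide)
  have hirr2 : Irreducible (X ^ 3 + X + 1 : (ZMod 2)[X]) := by
    rw [irreducible_iff_roots_eq_zero_of_degree_le_three (by rw [hdeg2]; norm_num)
      (by rw [hdeg2])]
    exact hroots
  have hirrZ : Irreducible (X ^ 3 - 3 * X - 1 : ℤ[X]) :=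
    hmonicZ.irreducible_of_irreducible_map (Int.castRingHom (ZMod 2)) _ (hmap2 ▸ hirr2)
  have := (hmonicZ.irreducible_iff_irreducible_map_fraction_map (K := ℚ)).mp hirrZ
  have hmapQ : (X ^ 3 - 3 * X - 1 : ℤ[X]).map (algebraMap ℤ ℚ) = X ^ 3 - 3 * X - 1 := by
    simp [Polynomial.map_sub, Polynomial.map_pow, Polynomial.map_mul, Polynomial.map_X,
      Polynomial.map_ofNat, Polynomial.map_one]
  rwa [hmapQ] at this

instance : Fact (Irreducible (X ^ 3 - 3 * X - 1 : ℚ[X])) := ⟨cubic_irreducible_rat⟩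

/-- The cubic number field `K = ℚ[X]/(X³ - 3X - 1)`. -/
noncomputable abbrev CubicK : Type := AdjoinRoot (X ^ 3 - 3 * X - 1 : ℚ[X])

noncomputable instance : Field CubicK := AdjoinRoot.instField

instance : CharZero CubicK :=
  charZero_of_injective_algebraMap (algebraMap ℚ CubicK).injective

instance : FiniteDimensional ℚ CubicK :=
  Module.Finite.of_basis (AdjoinRoot.powerBasis
    (cubic_irreducible_rat.ne_zero)).basis

instance : NumberField CubicK := ⟨⟩

section Aux
open Polynomial AdjoinRoot

noncomputable abbrev fQ : ℚ[X] := X ^ 3 - 3 * X - 1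

lemma fQ_monic : fQ.Monic := by unfold fQ; monicity!

lemma fQ_deg : fQ.degree = 3 := by unfold fQ; compute_degree!

lemma fQ_natDeg : fQ.natDegree = 3 := by unfold fQ; compute_degree!

lemma mod_eq {p q r : ℚ[X]} (h : p = fQ * q + r) (hr : r.degree < 3) : p %ₘ fQ = r := by
  rw [h, Polynomial.add_modByMonic, Polynomial.self_mul_modByMonic fQ_monic, zero_add,
    (Polynomial.modByMonic_eq_self_iff fQ_monic).2 (fQ_deg ▸ hr)]

lemma trace_mk (p : ℚ[X]) :
    Algebra.trace ℚ CubicK (AdjoinRoot.mk fQ p) =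
      ((p * 1) %ₘ fQ).coeff 0 + ((p * X) %ₘ fQ).coeff 1 + ((p * X ^ 2) %ₘ fQ).coeff 2 := by
  have key : ∀ i : Fin (AdjoinRoot.powerBasis' fQ_monic).dim,
      Algebra.leftMulMatrix (AdjoinRoot.powerBasis' fQ_monic).basis (AdjoinRoot.mk fQ p) i i
        = ((p * X ^ (i : ℕ)) %ₘ fQ).coeff i := by
    intro i
    rw [Algebra.leftMulMatrix_eq_repr_mul]
    have hb : (AdjoinRoot.powerBasis' fQ_monic).basis i = AdjoinRoot.mk fQ (X ^ (i : ℕ)) := by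
      rw [(AdjoinRoot.powerBasis' fQ_monic).basis_eq_pow, AdjoinRoot.powerBasis'_gen,
        ← AdjoinRoot.mk_X, ← map_pow]
    rw [hb, ← map_mul]
    show (AdjoinRoot.modByMonicHom fQ_monic (AdjoinRoot.mk fQ (p * X ^ (i : ℕ)))).coeff i = _
    rw [AdjoinRoot.modByMonicHom_mk]
  erw [Algebra.trace_eq_matrix_trace (AdjoinRoot.powerBasis' fQ_monic).basis, Matrix.trace]
  simp only [Matrix.diag_apply, key]
  rw [Fin.sum_univ_eq_sum_range (fun n => ((p * X ^ n) %ₘ fQ).coeff n), AdjoinRoot.powerBasis'_dim, fQ_natDeg]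
  rw [Finset.sum_range_succ, Finset.sum_range_succ, Finset.sum_range_one]
  norm_num

end Aux
open Polynomial in
lemma deg_lt {r : ℚ[X]} (h : r.degree ≤ 2) : r.degree < 3 := lt_of_le_of_lt h (by decide)

open Polynomial in
lemma trb0 : Algebra.trace ℚ CubicK (AdjoinRoot.mk fQ ((X - 1) ^ 0)) = 3 := by
  rw [trace_mk,
    mod_eq (q := 0) (r := (1 : ℚ[X])) (by unfold fQ; ring) (deg_lt (by compute_degree!)),
    mod_eq (q := 0) (r := X) (by unfold fQ; ring) (deg_lt (by compute_degree!)),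
    mod_eq (q := 0) (r := X ^ 2) (by unfold fQ; ring) (deg_lt (by compute_degree!))]
  norm_num [coeff_one, coeff_X]

open Polynomial in
lemma trb1 : Algebra.trace ℚ CubicK (AdjoinRoot.mk fQ ((X - 1) ^ 1)) = -3 := by
  rw [trace_mk,
    mod_eq (q := 0) (r := (-1 : ℚ[X]) + X) (by unfold fQ; ring) (deg_lt (by compute_degree!)),
    mod_eq (q := 0) (r := -X + X ^ 2) (by unfold fQ; ring) (deg_lt (by compute_degree!)),
    mod_eq (q := (1 : ℚ[X])) (r := (1 : ℚ[X]) + 3 * X - X ^ 2) (by unfold fQ; ring) (deg_lt (by compute_degree!))]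
  norm_num [coeff_one, coeff_X]

open Polynomial in
lemma trb2 : Algebra.trace ℚ CubicK (AdjoinRoot.mk fQ ((X - 1) ^ 2)) = 9 := by
  rw [trace_mk,
    mod_eq (q := 0) (r := (1 : ℚ[X]) - 2 * X + X ^ 2) (by unfold fQ; ring) (deg_lt (by compute_degree!)),
    mod_eq (q := (1 : ℚ[X])) (r := (1 : ℚ[X]) + 4 * X - 2 * X ^ 2) (by unfold fQ; ring) (deg_lt (by compute_degree!)),
    mod_eq (q := (-2 : ℚ[X]) + X) (r := (-2 : ℚ[X]) - 5 * X + 4 * X ^ 2) (by unfold fQ; ring) (deg_lt (by compute_degree!))]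
  norm_num [coeff_one, coeff_X]

open Polynomial in
lemma trb3 : Algebra.trace ℚ CubicK (AdjoinRoot.mk fQ ((X - 1) ^ 3)) = -18 := by
  rw [trace_mk,
    mod_eq (q := (1 : ℚ[X])) (r := 6 * X - 3 * X ^ 2) (by unfold fQ; ring) (deg_lt (by compute_degree!)),
    mod_eq (q := (-3 : ℚ[X]) + X) (r := (-3 : ℚ[X]) - 9 * X + 6 * X ^ 2) (by unfold fQ; ring) (deg_lt (by compute_degree!)),
    mod_eq (q := (6 : ℚ[X]) - 3 * X + X ^ 2) (r := (6 : ℚ[X]) + 15 * X - 9 * X ^ 2) (by unfold fQ; ring) (deg_lt (by compute_degree!))]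
  norm_num [coeff_one, coeff_X]

open Polynomial in
lemma trb4 : Algebra.trace ℚ CubicK (AdjoinRoot.mk fQ ((X - 1) ^ 4)) = 45 := by
  rw [trace_mk,
    mod_eq (q := (-4 : ℚ[X]) + X) (r := (-3 : ℚ[X]) - 15 * X + 9 * X ^ 2) (by unfold fQ; ring) (deg_lt (by compute_degree!)),
    mod_eq (q := (9 : ℚ[X]) - 4 * X + X ^ 2) (r := (9 : ℚ[X]) + 24 * X - 15 * X ^ 2) (by unfold fQ; ring) (deg_lt (by compute_degree!)),
    mod_eq (q := (-15 : ℚ[X]) + 9 * X - 4 * X ^ 2 + X ^ 3) (r := (-15 : ℚ[X]) - 36 * X + 24 * X ^ 2) (by unfold fQ; ring) (deg_lt (by compute_degree!))]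
  norm_num [coeff_one, coeff_X]
section Aux2
open Polynomial AdjoinRoot Algebra

noncomputable abbrev βe : CubicK := AdjoinRoot.root fQ - 1

lemma mk_sub_one : AdjoinRoot.mk fQ (X - 1) = βe := by
  rw [map_sub, AdjoinRoot.mk_X, map_one]

lemma βe_pow (n : ℕ) : βe ^ n = AdjoinRoot.mk fQ ((X - 1) ^ n) := by
  rw [map_pow, mk_sub_one]

lemma discr_pow_βe : Algebra.discr ℚ (fun i : Fin 3 => βe ^ (i : ℕ)) = 81 := by
  rw [Algebra.discr_def, Matrix.det_fin_three]
  have hk : ∀ a b : ℕ, βe ^ a * βe ^ b = AdjoinRoot.mk fQ ((X - 1) ^ (a + b)) := fun a b => by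
    rw [← pow_add, βe_pow]
  simp only [Algebra.traceMatrix_apply, Algebra.traceForm_apply, Fin.val_zero, Fin.val_one,
    Fin.val_two, hk, Nat.reduceAdd]
  simp only [trb0, trb1, trb2, trb3, trb4]
  norm_num

theorem cubicg_irreducible_rat : Irreducible (X ^ 3 + 3 * X ^ 2 - 3 : ℚ[X]) := by
  have h2 : (2 : (ZMod 2)[X]) = 0 := by
    rw [show ((2 : (ZMod 2)[X])) = ((2 : ℕ) : (ZMod 2)[X]) by norm_cast,
      ← Polynomial.C_eq_natCast, show ((2 : ℕ) : ZMod 2) = 0 from rfl, map_zero]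
  have hmonicZ : (X ^ 3 + 3 * X ^ 2 - 3 : ℤ[X]).Monic := by monicity!
  have hmap2 : (X ^ 3 + 3 * X ^ 2 - 3 : ℤ[X]).map (Int.castRingHom (ZMod 2)) =
      X ^ 3 + X ^ 2 + 1 := by
    simp only [Polynomial.map_sub, Polynomial.map_add, Polynomial.map_pow, Polynomial.map_mul,
      Polynomial.map_X, Polynomial.map_ofNat, Polynomial.map_one]
    linear_combination (X ^ 2 - 2) * h2
  have hmonic2 : (X ^ 3 + X ^ 2 + 1 : (ZMod 2)[X]).Monic := by monicity!
  have hdeg2 : (X ^ 3 + X ^ 2 + 1 : (ZMod 2)[X]).natDegree = 3 := by compute_degree!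
  have hroots : (X ^ 3 + X ^ 2 + 1 : (ZMod 2)[X]).roots = 0 := by
    rw [Multiset.eq_zero_iff_forall_notMem]
    intro x hx
    rw [mem_roots hmonic2.ne_zero] at hx
    have hx' : x ^ 3 + x ^ 2 + 1 = 0 := by simpa [IsRoot] using hx
    fin_cases x <;> exact absurd hx' (by decide)
  have hirr2 : Irreducible (X ^ 3 + X ^ 2 + 1 : (ZMod 2)[X]) := by
    rw [irreducible_iff_roots_eq_zero_of_degree_le_three (by rw [hdeg2]; norm_num)
      (by rw [hdeg2])]
    exact hroots
  have hirrZ : Irreducible (X ^ 3 + 3 * X ^ 2 - 3 : ℤ[X]) :=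
    hmonicZ.irreducible_of_irreducible_map (Int.castRingHom (ZMod 2)) _ (hmap2 ▸ hirr2)
  have := (hmonicZ.irreducible_iff_irreducible_map_fraction_map (K := ℚ)).mp hirrZ
  have hmapQ : (X ^ 3 + 3 * X ^ 2 - 3 : ℤ[X]).map (algebraMap ℤ ℚ) =
      X ^ 3 + 3 * X ^ 2 - 3 := by
    simp [Polynomial.map_sub, Polynomial.map_add, Polynomial.map_pow, Polynomial.map_mul,
      Polynomial.map_X, Polynomial.map_ofNat]
  rwa [hmapQ] at this

lemma βe_cube : βe ^ 3 + 3 * βe ^ 2 - 3 = 0 := by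
  rw [← mk_sub_one, ← map_pow, ← map_pow, ← map_ofNat (AdjoinRoot.mk fQ) 3, ← map_mul,
    ← map_add, ← map_sub,
    show ((X - 1) ^ 3 + 3 * (X - 1) ^ 2 - 3 : ℚ[X]) = fQ from by unfold fQ; ring,
    AdjoinRoot.mk_self]

lemma aeval_βe_Q : Polynomial.aeval βe (X ^ 3 + 3 * X ^ 2 - 3 : ℚ[X]) = 0 := by
  have h : Polynomial.aeval βe (X ^ 3 + 3 * X ^ 2 - 3 : ℚ[X]) = βe ^ 3 + 3 * βe ^ 2 - 3 := by
    simp [map_ofNat]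
  rw [h, βe_cube]

lemma aeval_βe_Z : Polynomial.aeval βe (X ^ 3 + 3 * X ^ 2 - 3 : ℤ[X]) = 0 := by
  have h : Polynomial.aeval βe (X ^ 3 + 3 * X ^ 2 - 3 : ℤ[X]) = βe ^ 3 + 3 * βe ^ 2 - 3 := by
    simp [map_ofNat]
  rw [h, βe_cube]

lemma βe_int : IsIntegral ℤ βe :=
  ⟨X ^ 3 + 3 * X ^ 2 - 3, by monicity!, by rw [← Polynomial.aeval_def]; exact aeval_βe_Z⟩

lemma minpoly_βe_Q : minpoly ℚ βe = X ^ 3 + 3 * X ^ 2 - 3 :=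
  (minpoly.eq_of_irreducible_of_monic cubicg_irreducible_rat aeval_βe_Q (by monicity!)).symm

lemma minpoly_βe_Z : minpoly ℤ βe = X ^ 3 + 3 * X ^ 2 - 3 := by
  have h1 := minpoly.isIntegrallyClosed_eq_field_fractions' ℚ βe_int
  apply Polynomial.map_injective (algebraMap ℤ ℚ) (algebraMap ℤ ℚ).injective_int
  rw [← h1, minpoly_βe_Q]
  simp [Polynomial.map_sub, Polynomial.map_add, Polynomial.map_pow, Polynomial.map_mul,
    Polynomial.map_X, Polynomial.map_ofNat]

lemma gZ_eisenstein :
    (X ^ 3 + 3 * X ^ 2 - 3 : ℤ[X]).IsEisensteinAt (Ideal.span {3}) := by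
  have hnd : (X ^ 3 + 3 * X ^ 2 - 3 : ℤ[X]).natDegree = 3 := by compute_degree!
  have hc0 : (X ^ 3 + 3 * X ^ 2 - 3 : ℤ[X]).coeff 0 = -3 := by norm_num [coeff_X, coeff_one]
  have hc1 : (X ^ 3 + 3 * X ^ 2 - 3 : ℤ[X]).coeff 1 = 0 := by norm_num [coeff_X, coeff_one]
  have hc2 : (X ^ 3 + 3 * X ^ 2 - 3 : ℤ[X]).coeff 2 = 3 := by norm_num [coeff_X, coeff_one]
  have hl : (X ^ 3 + 3 * X ^ 2 - 3 : ℤ[X]).leadingCoeff = 1 := by monicity!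
  refine ⟨?_, ?_, ?_⟩
  · rw [hl]
    intro h
    have := Ideal.mem_span_singleton.1 h
    norm_num at this
  · intro n hn
    rw [hnd] at hn
    interval_cases n
    · rw [hc0]; exact Ideal.mem_span_singleton.2 ⟨-1, by norm_num⟩
    · rw [hc1]; exact Ideal.zero_mem _
    · rw [hc2]; exact Ideal.mem_span_singleton.2 ⟨1, by ring⟩
  · rw [hc0, Ideal.span_singleton_pow]
    intro h
    have := Ideal.mem_span_singleton.1 h
    norm_num at this

noncomputable def Bβ : PowerBasis ℚ CubicK :=
  PowerBasis.ofAdjoinEqTop (IsIntegral.of_finite ℚ βe)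
    (PowerBasis.adjoin_eq_top_of_gen_mem_adjoin (B := AdjoinRoot.powerBasis' fQ_monic) <| by
      rw [AdjoinRoot.powerBasis'_gen, show AdjoinRoot.root fQ = βe + 1 from (sub_add_cancel _ _).symm]
      exact Subalgebra.add_mem _ (Algebra.self_mem_adjoin_singleton ℚ βe) (Subalgebra.one_mem _))

lemma Bβ_gen : Bβ.gen = βe := PowerBasis.ofAdjoinEqTop_gen _ _

lemma Bβ_dim : Bβ.dim = 3 := by
  have : Bβ.dim = (minpoly ℚ βe).natDegree := rfl
  rw [this, minpoly_βe_Q]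
  compute_degree!

lemma discr_Bβ : Algebra.discr ℚ Bβ.basis = 81 := by
  rw [← Algebra.discr_reindex _ _ (finCongr Bβ_dim)]
  have h : (⇑Bβ.basis ∘ ⇑(finCongr Bβ_dim).symm) = fun i : Fin 3 => βe ^ (i : ℕ) := by
    ext i
    simp [Function.comp, Bβ.basis_eq_pow, Bβ_gen]
  rw [h, discr_pow_βe]

end Aux2
section Aux3
open Polynomial AdjoinRoot Algebra

lemma isIntClos : IsIntegralClosure (Algebra.adjoin ℤ ({βe} : Set CubicK)) ℤ CubicK := by
  refine ⟨Subtype.val_injective, fun {x} => ⟨fun h => ⟨⟨x, ?_⟩, rfl⟩, ?_⟩⟩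
  swap
  · rintro ⟨y, rfl⟩
    exact IsIntegral.algebraMap
      ((le_integralClosure_iff_isIntegral.1 (adjoin_le_integralClosure βe_int)).isIntegral _)
  · have hgen : IsIntegral ℤ Bβ.gen := Bβ_gen ▸ βe_int
    have H := Algebra.discr_mul_isIntegral_mem_adjoin ℚ (B := Bβ) hgen h
    rw [discr_Bβ, Bβ_gen] at H
    have hei : (minpoly ℤ Bβ.gen).IsEisensteinAt (Ideal.span {3}) := by
      rw [Bβ_gen, minpoly_βe_Z]; exact gZ_eisenstein
    have hsm : (3 : ℤ) ^ 4 • x ∈ Algebra.adjoin ℤ ({Bβ.gen} : Set CubicK) := by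
      rw [Bβ_gen]
      have h2 : ((3 : ℤ) ^ 4) • x = (81 : ℚ) • x := by
        rw [← algebraMap_smul (R := ℤ) ℚ ((3 : ℤ) ^ 4) x]
        norm_num
      rw [h2]; exact H
    have := mem_adjoin_of_smul_prime_pow_smul_of_minpoly_isEisensteinAt
      Int.prime_three hgen h hsm hei
    rwa [Bβ_gen] at this

end Aux3
open Polynomial in
lemma totallyRealPart : ∀ φ : CubicK →+* ℂ, ∀ x : CubicK, (φ x).im = 0 := by
  intro φ x
  have hroot : (AdjoinRoot.root fQ) ^ 3 - 3 * (AdjoinRoot.root fQ) - 1 = 0 := by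
    rw [← AdjoinRoot.mk_X (f := fQ), ← map_pow, ← map_ofNat (AdjoinRoot.mk fQ) 3, ← map_mul,
      ← map_one (AdjoinRoot.mk fQ), ← map_sub, ← map_sub]
    exact AdjoinRoot.mk_self
  set z := φ (AdjoinRoot.root fQ) with hzdef
  have hz : z ^ 3 - 3 * z - 1 = 0 := by
    have := congrArg φ hroot
    simpa [map_sub, map_pow, map_mul, map_one, map_ofNat] using this
  have him : z.im = 0 := by
    have h1 := congrArg Complex.re hz
    have h2 := congrArg Complex.im hz
    have hz3 : z ^ 3 = z * z * z := by ring
    rw [hz3] at h1 h2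
    simp only [Complex.sub_re, Complex.sub_im, Complex.mul_re, Complex.mul_im, Complex.one_re,
      Complex.one_im, Complex.re_ofNat, Complex.im_ofNat, Complex.zero_re, Complex.zero_im] at h1 h2
    by_contra hb
    set a := z.re
    set b := z.im
    have h3 : b ^ 2 = 3 * a ^ 2 - 3 := by
      have hfac : b * (3 * a ^ 2 - b ^ 2 - 3) = 0 := by nlinarith [h2]
      rcases mul_eq_zero.1 hfac with h | h
      · exact absurd h hb
      · nlinarith
    have hb2 : 0 < b ^ 2 := by positivity
    have ha2 : 1 < a ^ 2 := by nlinarith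
    have h4 : 8 * a ^ 3 - 6 * a + 1 = 0 := by nlinarith
    rcases le_or_gt a 0 with h | h
    · nlinarith
    · nlinarith
  obtain ⟨p, rfl⟩ := AdjoinRoot.mk_surjective x
  have hx : φ ((AdjoinRoot.mk fQ) p) = Polynomial.eval₂ (algebraMap ℚ ℂ) z p := by
    rw [← AdjoinRoot.aeval_eq, Polynomial.aeval_def, Polynomial.hom_eval₂]
    congr 1
    exact Subsingleton.elim _ _
  rw [hx]
  have hzre : z = Complex.ofRealHom z.re := by
    apply Complex.ext
    · rfl
    · simpa using him
  rw [hzre, show (algebraMap ℚ ℂ) = Complex.ofRealHom.comp (algebraMap ℚ ℝ) from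
    Subsingleton.elim _ _, ← Polynomial.hom_eval₂]
  simp
/-- The cubic number field `K = ℚ[X]/(X³ - 3X - 1)` (the totally real cubic subfield of
`ℚ(ζ₉)`) is totally real — every complex embedding has image contained in `ℝ` — and its
discriminant equals `81`. -/
theorem cubicK_totallyReal_and_discr_eq :
    (∀ φ : CubicK →+* ℂ, ∀ x : CubicK, (φ x).im = 0) ∧
    NumberField.discr CubicK = 81 := by
  refine ⟨totallyRealPart, ?_⟩
  haveI := isIntClos
  let B₁ : PowerBasis ℤ (NumberField.RingOfIntegers CubicK) :=
    (Algebra.adjoin.powerBasis' βe_int).map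
      (IsIntegralClosure.equiv ℤ (Algebra.adjoin ℤ ({βe} : Set CubicK)) CubicK
        (NumberField.RingOfIntegers CubicK))
  have hdim : B₁.dim = 3 := by
    have h1 : B₁.dim = (minpoly ℤ βe).natDegree := rfl
    rw [h1, minpoly_βe_Z]
    compute_degree!
  have hgen : algebraMap (NumberField.RingOfIntegers CubicK) CubicK B₁.gen = βe := by
    have h1 : B₁.gen = (IsIntegralClosure.equiv ℤ (Algebra.adjoin ℤ ({βe} : Set CubicK)) CubicK
        (NumberField.RingOfIntegers CubicK))
        ((Algebra.adjoin.powerBasis' βe_int).gen) := rfl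
    rw [h1, IsIntegralClosure.algebraMap_equiv, Algebra.adjoin.powerBasis'_gen]
    rfl
  refine (algebraMap ℤ ℚ).injective_int ?_
  rw [← NumberField.discr_eq_discr _ B₁.basis,
    ← Algebra.discr_localizationLocalization ℤ (nonZeroDivisors ℤ) CubicK B₁.basis,
    ← Algebra.discr_reindex _ _ (finCongr hdim)]
  have h : ((B₁.basis.localizationLocalization ℚ (nonZeroDivisors ℤ) CubicK) ∘
      ⇑(finCongr hdim).symm) = fun i : Fin 3 => βe ^ (i : ℕ) := by
    ext i
    simp only [Function.comp_apply, Module.Basis.localizationLocalization_apply, B₁.basis_eq_pow,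
      map_pow, hgen, finCongr_symm, finCongr_apply, Fin.coe_cast]
  rw [h, discr_pow_βe]
  norm_num
end

section
/- Let K = ℚ[X]/(X³ − 3X − 1) with ring of integers O_K. Then 3 is totally ramified in K: there exists a prime ideal 𝔭 of O_K such that the ideal of O_K generated by 3 equals 𝔭³. -/
open Polynomial

/-!
With `θ` the class of `X`, `π = θ - 1` satisfies `π³ = 3 θ (2 - θ)` and `θ (2 - θ)` is a unit
(with inverse `θ² + θ - 1`), so `(3) = (π)³`. Taking absolute norms, `N(π)³ = N(3) = 3³`, so
`N(π) = 3` is prime and `(π)` is a prime ideal.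
-/

open NumberField

theorem Ideal.isPrime_of_pow_finrank_eq_span_natCast {S : Type*} [CommRing S]
    [IsDedekindDomain S] [Module.Free ℤ S] [Module.Finite ℤ S] {p : ℕ} (hp : p.Prime)
    {I : Ideal S} (hI : I ^ Module.finrank ℤ S = Ideal.span {(p : S)}) : I.IsPrime := by
  have hnorm : Ideal.absNorm I ^ Module.finrank ℤ S = p ^ Module.finrank ℤ S := by
    rw [← map_pow, hI, Ideal.absNorm_span_natCast]
  rw [← Nat.pow_left_injective Module.finrank_pos.ne' hnorm] at hp
  exact Ideal.isPrime_of_irreducible_absNorm hp.prime.irreducible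

namespace CubicK

theorem finrank_ringOfIntegers : Module.finrank ℤ (𝓞 CubicK) = 3 := by
  rw [RingOfIntegers.rank,
    (AdjoinRoot.powerBasis cubic_irreducible_rat.ne_zero).finrank, AdjoinRoot.powerBasis_dim]
  compute_degree!

theorem root_pow_three :
    AdjoinRoot.root (X ^ 3 - 3 * X - 1 : ℚ[X]) ^ 3 = 3 * AdjoinRoot.root _ + 1 := by
  have h := AdjoinRoot.eval₂_root (X ^ 3 - 3 * X - 1 : ℚ[X])
  simp only [eval₂_sub, eval₂_mul, eval₂_pow, eval₂_X, eval₂_one, eval₂_ofNat] at h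
  linear_combination h

theorem isIntegral_root : IsIntegral ℤ (AdjoinRoot.root (X ^ 3 - 3 * X - 1 : ℚ[X])) := by
  refine ⟨X ^ 3 - 3 * X - 1, by monicity!, ?_⟩
  simp only [eval₂_sub, eval₂_mul, eval₂_pow, eval₂_X, eval₂_one, eval₂_ofNat]
  linear_combination root_pow_three

noncomputable def θ : 𝓞 CubicK := ⟨AdjoinRoot.root _, isIntegral_root⟩

theorem θ_pow_three : θ ^ 3 = 3 * θ + 1 := by
  ext
  push_cast
  exact root_pow_three

theorem associated_three_θ_sub_one_pow_three : Associated 3 ((θ - 1) ^ 3) := by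
  have hunit : IsUnit (θ * (2 - θ)) :=
    .of_mul_eq_one (θ ^ 2 + θ - 1) (by linear_combination (1 - θ) * θ_pow_three)
  exact ⟨hunit.unit, by rw [IsUnit.unit_spec]; linear_combination -θ_pow_three⟩

end CubicK

open CubicK in
/-- In the ring of integers of the cubic field `K = ℚ[X]/(X³ - 3X - 1)`, the rational prime
`3` is totally ramified: there is a prime ideal `𝔭` with `(3) = 𝔭³`. -/
theorem three_totally_ramified_in_cubicK :
    ∃ 𝔭 : Ideal (NumberField.RingOfIntegers CubicK),
      𝔭.IsPrime ∧
      Ideal.span {(3 : NumberField.RingOfIntegers CubicK)} = 𝔭 ^ 3 := by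
  have hspan : Ideal.span {(3 : 𝓞 CubicK)} = Ideal.span {θ - 1} ^ 3 := by
    rw [Ideal.span_singleton_pow, Ideal.span_singleton_eq_span_singleton]
    exact associated_three_θ_sub_one_pow_three
  refine ⟨Ideal.span {θ - 1}, ?_, hspan⟩
  refine Ideal.isPrime_of_pow_finrank_eq_span_natCast Nat.prime_three ?_
  rw [finrank_ringOfIntegers, ← hspan, Nat.cast_ofNat]
end
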